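/- arXiv:1804.09744 — 4 statements merged into one kernel-verified Lean document; each statement's English description precedes it below -/
import Mathlib

section
/- For μ ∈ ℂ with Re μ > 0 and α ∈ (0, π], a holomorphic branch of w ↦ w^{1 - i·(Im μ)/(Re μ)} maps the spirallike sector Spir[μ, 2α, 0] bijectively onto the ordinary sector {ρe^{iθ} : ρ > 0, θ ∈ (-α, α)}. -/
/-!
Every point of `Spir[μ, 2α, 0]` is uniquely `exp (t μ + θ i)` with `t ∈ ℝ` and
`θ ∈ (-α, α)`, and `w ↦ t μ + θ i` is a holomorphic logarithm there, being a continuous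
local inverse of `exp`.
Since `c = 1 - i Im μ / Re μ` satisfies `c μ = |μ|² / Re μ ∈ ℝ` and `Im (c θ i) = θ`,
multiplication by `c` maps the oblique strip `ℝ μ + i (-α, α)` onto the horizontal strip
`|Im z| < α`, which `exp` maps bijectively onto the sector because `α ≤ π`.
-/

/-- The μ-spirallike sector of amplitude `2α` and center `e^{iθ₀}`. -/
def Spir (μ : ℂ) (α θ₀ : ℝ) : Set ℂ :=
  {w : ℂ | ∃ t θ : ℝ, θ ∈ Set.Ioo (θ₀ - α) (θ₀ + α) ∧
      w = Complex.exp (t * μ + θ * Complex.I)}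

open Set
open scoped Real

namespace Complex

lemma exp_mem_slitPlane_of_im_mem_Ioo {z : ℂ} (hz : z.im ∈ Ioo (-π) π) :
    exp z ∈ slitPlane := by
  rw [exp_mem_slitPlane, toIocMod_eq_self _ |>.2 ⟨hz.1, by linarith [hz.2]⟩]
  exact hz.2.ne

lemma bijOn_exp_im_preimage_Ioo {α : ℝ} (hα : α ≤ π) :
    BijOn exp (im ⁻¹' Ioo (-α) α)
      {w | ∃ ρ θ : ℝ, 0 < ρ ∧ θ ∈ Ioo (-α) α ∧ w = ρ * exp (θ * I)} := by
  have hIoc : Ioo (-α) α ⊆ Ioc (-π) π :=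
    (Ioo_subset_Ioo (neg_le_neg hα) hα).trans Ioo_subset_Ioc_self
  refine InvOn.bijOn (f' := log) ⟨fun z hz => log_exp (hIoc hz).1 (hIoc hz).2, ?_⟩ ?_ ?_
  · rintro _ ⟨ρ, θ, hρ, -, rfl⟩
    exact exp_log (mul_ne_zero (ofReal_ne_zero.2 hρ.ne') (exp_ne_zero _))
  · intro z hz
    refine ⟨Real.exp z.re, z.im, Real.exp_pos _, hz, ?_⟩
    rw [ofReal_exp, ← exp_add, re_add_im]
  · rintro _ ⟨ρ, θ, hρ, hθ, rfl⟩
    rw [mem_preimage, log_ofReal_mul hρ (exp_ne_zero _), add_im, ofReal_im, zero_add,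
      log_exp (by simpa using (hIoc hθ).1) (by simpa using (hIoc hθ).2)]
    simpa using hθ

/-- The `t` with `‖exp (t μ)‖ = ‖w‖`. -/
noncomputable def spiralTime (μ w : ℂ) : ℝ := Real.log ‖w‖ / μ.re

/-- The logarithm adapted to `μ`-spirals: slide `w` along its spiral `s ↦ w exp (s μ)` to the
unit circle, take the principal logarithm there, and slide back. -/
noncomputable def spiralLog (μ w : ℂ) : ℂ :=
  spiralTime μ w * μ + log (w * exp (-(spiralTime μ w * μ)))

lemma exp_spiralLog (μ : ℂ) {w : ℂ} (hw : w ≠ 0) : exp (spiralLog μ w) = w := by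
  rw [spiralLog, exp_add, exp_log (mul_ne_zero hw (exp_ne_zero _)), mul_left_comm,
    ← exp_add, add_neg_cancel, exp_zero, mul_one]

lemma spiralTime_exp {μ : ℂ} (hμ : μ.re ≠ 0) (t θ : ℝ) :
    spiralTime μ (exp (t * μ + θ * I)) = t := by
  simp [spiralTime, norm_exp, hμ]

lemma spiralLog_exp {μ : ℂ} (hμ : μ.re ≠ 0) {t θ : ℝ} (hθ : θ ∈ Ioc (-π) π) :
    spiralLog μ (exp (t * μ + θ * I)) = t * μ + θ * I := by
  rw [spiralLog, spiralTime_exp hμ, ← exp_add, add_neg_cancel_comm,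
    log_exp (by simpa using hθ.1) (by simpa using hθ.2)]

lemma continuousAt_spiralTime (μ : ℂ) {w : ℂ} (hw : w ≠ 0) :
    ContinuousAt (spiralTime μ) w :=
  ((Real.continuousAt_log (norm_ne_zero_iff.2 hw)).comp continuous_norm.continuousAt).div_const _

lemma differentiableAt_spiralLog (μ : ℂ) {w : ℂ} (hw : w ≠ 0)
    (hslit : w * exp (-(spiralTime μ w * μ)) ∈ slitPlane) :
    DifferentiableAt ℂ (spiralLog μ) w := by
  have hcont : ContinuousAt (spiralLog μ) w := by
    have ht : ContinuousAt (fun y => (spiralTime μ y : ℂ) * μ) w :=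
      (continuous_ofReal.continuousAt.comp (continuousAt_spiralTime μ hw)).mul continuousAt_const
    exact ht.add ((continuousAt_id.mul ht.neg.cexp).clog hslit)
  have hinv : ∀ᶠ y in nhds w, exp (spiralLog μ y) = y :=
    Filter.mem_of_superset (isOpen_ne.mem_nhds hw) fun y hy => exp_spiralLog μ hy
  exact (HasDerivAt.of_local_left_inverse hcont (hasDerivAt_exp _) (exp_ne_zero _)
    hinv).differentiableAt

lemma differentiableOn_spiralLog {μ : ℂ} (hμ : μ.re ≠ 0) {α : ℝ} (hα : α ≤ π) :
    DifferentiableOn ℂ (spiralLog μ) (Spir μ α 0) := by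
  rintro _ ⟨t, θ, hθ, rfl⟩
  rw [zero_sub, zero_add] at hθ
  refine (differentiableAt_spiralLog μ (exp_ne_zero _) ?_).differentiableWithinAt
  rw [spiralTime_exp hμ, ← exp_add, add_neg_cancel_comm]
  exact exp_mem_slitPlane_of_im_mem_Ioo (by simpa using Ioo_subset_Ioo (neg_le_neg hα) hα hθ)

def spiralStrip (μ : ℂ) (α : ℝ) : Set ℂ :=
  {z | ∃ t θ : ℝ, θ ∈ Ioo (-α) α ∧ z = t * μ + θ * I}

lemma bijOn_spiralLog {μ : ℂ} (hμ : μ.re ≠ 0) {α : ℝ} (hα : α ≤ π) :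
    BijOn (spiralLog μ) (Spir μ α 0) (spiralStrip μ α) := by
  have hIoc : Ioo (-α) α ⊆ Ioc (-π) π :=
    (Ioo_subset_Ioo (neg_le_neg hα) hα).trans Ioo_subset_Ioc_self
  refine InvOn.bijOn (f' := exp) ⟨?_, ?_⟩ ?_ ?_
  · rintro _ ⟨t, θ, -, rfl⟩
    exact exp_spiralLog μ (exp_ne_zero _)
  · rintro _ ⟨t, θ, hθ, rfl⟩
    exact spiralLog_exp hμ (hIoc hθ)
  · rintro _ ⟨t, θ, hθ, rfl⟩
    rw [zero_sub, zero_add] at hθ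
    exact ⟨t, θ, hθ, spiralLog_exp hμ (hIoc hθ)⟩
  · rintro _ ⟨t, θ, hθ, rfl⟩
    exact ⟨t, θ, by rwa [zero_sub, zero_add], rfl⟩

lemma straightening_mul {μ : ℂ} (hμ : μ.re ≠ 0) (t θ : ℝ) :
    (1 - I * (μ.im / μ.re)) * (t * μ + θ * I) =
      ((t * normSq μ + θ * μ.im) / μ.re : ℝ) + θ * I := by
  apply Complex.ext <;> simp [normSq_apply] <;> field_simp <;> ring

lemma bijOn_straightening_mul_spiralStrip {μ : ℂ} (hμ : μ.re ≠ 0) (α : ℝ) :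
    BijOn ((1 - I * (μ.im / μ.re)) * ·) (spiralStrip μ α) (im ⁻¹' Ioo (-α) α) := by
  have hnormSq : normSq μ ≠ 0 := (normSq_pos.2 fun h => hμ (by simp [h])).ne'
  refine ⟨?_, ?_, ?_⟩
  · rintro _ ⟨t, θ, hθ, rfl⟩
    simpa [straightening_mul hμ] using hθ
  · refine (mul_right_injective₀ fun h => ?_).injOn
    simpa using congrArg re h
  · intro z hz
    refine ⟨_, ⟨(z.re * μ.re - z.im * μ.im) / normSq μ, z.im, hz, rfl⟩, ?_⟩
    dsimp only
    rw [straightening_mul hμ]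
    conv_rhs => rw [← re_add_im z]
    congr 2
    field_simp
    ring

end Complex

open Complex in
/-- for `Re μ > 0` and `α ∈ (0, π]`, there is a holomorphic branch of
`w ↦ w^{1 - i (Im μ)/(Re μ)}` on `Spir[μ, 2α, 0]` (normalized so that
`exp(tμ) ↦ exp(tμ(1 - i Im μ / Re μ))`) mapping it bijectively onto the
ordinary sector `{ρ e^{iθ} : ρ > 0, θ ∈ (-α, α)}`. -/
theorem spirallike_sector_straightening (μ : ℂ) (hμ : 0 < μ.re) (α : ℝ)
    (hα : α ∈ Set.Ioc 0 Real.pi) :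
    ∃ f : ℂ → ℂ,
      DifferentiableOn ℂ f (Spir μ α 0) ∧
      -- `f` is a branch of `w ↦ w^{c}` with `c = 1 - i (Im μ)/(Re μ)`:
      (∀ w ∈ Spir μ α 0, ∃ l : ℂ, Complex.exp l = w ∧
          f w = Complex.exp ((1 - Complex.I * (μ.im / μ.re)) * l)) ∧
      -- normalization
      (∀ t : ℝ, f (Complex.exp (t * μ)) =
          Complex.exp (t * μ * (1 - Complex.I * (μ.im / μ.re)))) ∧
      Set.BijOn f (Spir μ α 0)
        {w : ℂ | ∃ ρ θ : ℝ, 0 < ρ ∧ θ ∈ Set.Ioo (-α) α ∧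
            w = ρ * Complex.exp (θ * Complex.I)} := by
  have hμ₀ : μ.re ≠ 0 := hμ.ne'
  refine ⟨fun w => exp ((1 - I * (μ.im / μ.re)) * spiralLog μ w),
    ((differentiableOn_spiralLog hμ₀ hα.2).const_mul _).cexp, ?_, fun t => ?_,
    (bijOn_exp_im_preimage_Ioo hα.2).comp
      ((bijOn_straightening_mul_spiralStrip hμ₀ α).comp (bijOn_spiralLog hμ₀ hα.2))⟩
  · rintro _ ⟨t, θ, -, rfl⟩
    exact ⟨_, exp_spiralLog μ (exp_ne_zero _), rfl⟩
  · have h : spiralLog μ (exp (t * μ)) = t * μ := by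
      simpa using
        spiralLog_exp hμ₀ (t := t) (θ := 0) ⟨neg_lt_zero.2 Real.pi_pos, Real.pi_pos.le⟩
    exact congrArg exp (by rw [h, mul_comm])
end

section
/- For every c > 1 and M > 0 there exists R > 0 such that for every p in the unit disc 𝔻, and all z, w in the hyperbolic disc D^{hyp}(p, M) of center p and radius M, the hyperbolic distance of the domain D^{hyp}(p, R) satisfies k_{D^{hyp}(p,R)}(z, w) ≤ c·ω(z, w), where ω is the hyperbolic distance of 𝔻. -/
/-- The Poincaré (hyperbolic) distance of the unit disc, with density `1/(1-|z|²)`: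
`ω(z,w) = arctanh |(z-w)/(1 - z̄ w)|`, where `arctanh x = ½ log((1+x)/(1-x))`. -/
noncomputable def poincare (z w : ℂ) : ℝ :=
  (1 / 2) * Real.log ((1 + ‖(z - w) / (1 - (starRingEnd ℂ) z * w)‖) /
    (1 - ‖(z - w) / (1 - (starRingEnd ℂ) z * w)‖))

/-- The hyperbolic disc `D^{hyp}(p, R)` of center `p ∈ 𝔻` and radius `R`. -/
def hypDisc (p : ℂ) (R : ℝ) : Set ℂ :=
  {z ∈ Metric.ball (0:ℂ) 1 | poincare z p < R}

/-!
Write `m = tanh M`, `r = tanh R`, and let `φ_p` be the involution of the disc exchanging `p`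
and `0`. The chart `ζ ↦ φ_p (r ζ)` maps the unit disc into `D^{hyp}(p, R)`, so Schwarz–Pick
applied to `h` composed with it gives `ω(h z, h w) ≤ ω(a / r, b / r)` with `a = φ_p z`,
`b = φ_p w` in the closed disc of radius `m`. For such points, dividing by `r` multiplies the
pseudo-hyperbolic distance `|a - b| / |1 - ā b|` by at most `K = (1 - m²) / (r² - m²)`, which
tends to `1` as `r → 1`; since that distance stays bounded away from `1`,
`artanh (K x) ≤ c artanh x` for `K` close enough to `1`. Finally `ω(a, b) ≤ ω(z, w)` by
Schwarz–Pick for `φ_p`.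
-/

open Complex ComplexConjugate Metric Set Filter Topology Real

noncomputable def pseudoHyperbolicDist (z w : ℂ) : ℝ := ‖(z - w) / (1 - conj z * w)‖

/-- The involutive automorphism of the unit disc exchanging `a` and `0`. -/
noncomputable def mobius (a z : ℂ) : ℂ := (a - z) / (1 - conj a * z)

theorem norm_one_sub_conj_mul_sq_sub_norm_sub_sq (z w : ℂ) :
    ‖1 - conj z * w‖ ^ 2 - ‖z - w‖ ^ 2 = (1 - ‖z‖ ^ 2) * (1 - ‖w‖ ^ 2) := by
  simp only [← normSq_eq_norm_sq, normSq_apply, mul_re, mul_im, sub_re, sub_im, one_re, one_im,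
    conj_re, conj_im]
  ring

theorem norm_sub_lt_norm_one_sub_conj_mul {z w : ℂ} (hz : ‖z‖ < 1) (hw : ‖w‖ < 1) :
    ‖z - w‖ < ‖1 - conj z * w‖ := by
  have hid := norm_one_sub_conj_mul_sq_sub_norm_sub_sq z w
  have hpos : 0 < (1 - ‖z‖ ^ 2) * (1 - ‖w‖ ^ 2) := by
    apply mul_pos <;> nlinarith [norm_nonneg z, norm_nonneg w]
  exact lt_of_pow_lt_pow_left₀ 2 (norm_nonneg _) (by linarith)

theorem one_sub_conj_mul_ne_zero {z w : ℂ} (hz : ‖z‖ < 1) (hw : ‖w‖ < 1) :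
    1 - conj z * w ≠ 0 := by
  rw [← norm_pos_iff]
  exact (norm_nonneg _).trans_lt (norm_sub_lt_norm_one_sub_conj_mul hz hw)

theorem pseudoHyperbolicDist_nonneg (z w : ℂ) : 0 ≤ pseudoHyperbolicDist z w := norm_nonneg _

theorem pseudoHyperbolicDist_comm (z w : ℂ) :
    pseudoHyperbolicDist z w = pseudoHyperbolicDist w z := by
  have hden : 1 - conj w * z = conj (1 - conj z * w) := by simp [mul_comm]
  rw [pseudoHyperbolicDist, pseudoHyperbolicDist, norm_div, norm_div, norm_sub_rev z w, hden,
    norm_conj]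

theorem pseudoHyperbolicDist_lt_one {z w : ℂ} (hz : ‖z‖ < 1) (hw : ‖w‖ < 1) :
    pseudoHyperbolicDist z w < 1 := by
  rw [pseudoHyperbolicDist, norm_div, div_lt_one ((norm_nonneg _).trans_lt
    (norm_sub_lt_norm_one_sub_conj_mul hz hw))]
  exact norm_sub_lt_norm_one_sub_conj_mul hz hw

theorem poincare_eq_artanh {z w : ℂ} (hz : ‖z‖ < 1) (hw : ‖w‖ < 1) :
    poincare z w = artanh (pseudoHyperbolicDist z w) := by
  rw [artanh_eq_half_log ⟨by linarith [pseudoHyperbolicDist_nonneg z w],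
    (pseudoHyperbolicDist_lt_one hz hw).le⟩]
  rfl

theorem norm_mobius (a z : ℂ) : ‖mobius a z‖ = pseudoHyperbolicDist a z := rfl

@[simp] theorem mobius_self (a : ℂ) : mobius a a = 0 := by simp [mobius]

@[simp] theorem mobius_zero (a : ℂ) : mobius a 0 = a := by simp [mobius]

theorem mobius_mobius {a z : ℂ} (ha : ‖a‖ < 1) (hz : ‖z‖ < 1) :
    mobius a (mobius a z) = z := by
  have hz' := one_sub_conj_mul_ne_zero ha hz
  have ha' := one_sub_conj_mul_ne_zero ha ha
  have hnum : a - (a - z) / (1 - conj a * z) = z * (1 - conj a * a) / (1 - conj a * z) := by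
    rw [eq_div_iff hz', sub_mul, div_mul_cancel₀ _ hz']
    ring
  have hden :
      1 - conj a * ((a - z) / (1 - conj a * z)) = (1 - conj a * a) / (1 - conj a * z) := by
    rw [eq_div_iff hz', sub_mul, mul_assoc, div_mul_cancel₀ _ hz']
    ring
  rw [mobius, mobius, hnum, hden, div_div_div_cancel_right₀ hz', mul_div_cancel_right₀ _ ha']

theorem mapsTo_mobius {a : ℂ} (ha : ‖a‖ < 1) : MapsTo (mobius a) (ball 0 1) (ball 0 1) :=
  fun _ hz ↦ mem_ball_zero_iff.2 (pseudoHyperbolicDist_lt_one ha (mem_ball_zero_iff.1 hz))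

theorem differentiableOn_mobius {a : ℂ} (ha : ‖a‖ < 1) :
    DifferentiableOn ℂ (mobius a) (ball 0 1) :=
  ((differentiableOn_const a).sub differentiableOn_id).div
    ((differentiableOn_const 1).sub (differentiableOn_id.const_mul _))
    fun _ hz ↦ one_sub_conj_mul_ne_zero ha (mem_ball_zero_iff.1 hz)

theorem pseudoHyperbolicDist_le_of_mapsTo_ball {f : ℂ → ℂ}
    (hd : DifferentiableOn ℂ f (ball 0 1)) (hf : MapsTo f (ball 0 1) (ball 0 1)) {z w : ℂ}
    (hz : ‖z‖ < 1) (hw : ‖w‖ < 1) :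
    pseudoHyperbolicDist (f z) (f w) ≤ pseudoHyperbolicDist z w := by
  have hfz : ‖f z‖ < 1 := mem_ball_zero_iff.1 (hf (mem_ball_zero_iff.2 hz))
  let g := mobius (f z) ∘ f ∘ mobius z
  have hg : DifferentiableOn ℂ g (ball 0 1) :=
    (differentiableOn_mobius hfz).comp (hd.comp (differentiableOn_mobius hz) (mapsTo_mobius hz))
      (hf.comp (mapsTo_mobius hz))
  have hgmaps : MapsTo g (ball 0 1) (ball 0 1) :=
    (mapsTo_mobius hfz).comp (hf.comp (mapsTo_mobius hz))
  have hg0 : g 0 = 0 := by simp [g]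
  -- Schwarz's lemma for `g` at the point `mobius z w`, which `g` sends to `mobius (f z) (f w)`.
  have := Complex.norm_le_norm_of_mapsTo_ball hg (hgmaps.mono_right ball_subset_closedBall) hg0
    (z := mobius z w) (pseudoHyperbolicDist_lt_one hz hw)
  rwa [show g (mobius z w) = mobius (f z) (f w) by
    simp only [g, Function.comp_apply, mobius_mobius hz hw], norm_mobius, norm_mobius] at this

theorem poincare_le_of_mapsTo_ball {f : ℂ → ℂ} (hd : DifferentiableOn ℂ f (ball 0 1))
    (hf : MapsTo f (ball 0 1) (ball 0 1)) {z w : ℂ} (hz : ‖z‖ < 1) (hw : ‖w‖ < 1) :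
    poincare (f z) (f w) ≤ poincare z w := by
  rw [poincare_eq_artanh (mem_ball_zero_iff.1 (hf (mem_ball_zero_iff.2 hz)))
    (mem_ball_zero_iff.1 (hf (mem_ball_zero_iff.2 hw))), poincare_eq_artanh hz hw]
  exact artanh_le_artanh (by linarith [pseudoHyperbolicDist_nonneg (f z) (f w)])
    (pseudoHyperbolicDist_lt_one hz hw) (pseudoHyperbolicDist_le_of_mapsTo_ball hd hf hz hw)

theorem sq_pseudoHyperbolicDist_le {a b : ℂ} {m : ℝ} (ha : ‖a‖ ≤ m) (hb : ‖b‖ ≤ m)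
    (hm : m < 1) :
    pseudoHyperbolicDist a b ^ 2 ≤ 1 - (1 - m ^ 2) ^ 2 / 4 := by
  have hm0 : 0 ≤ m := (norm_nonneg a).trans ha
  have hD : 0 < ‖1 - conj a * b‖ := (norm_nonneg _).trans_lt
    (norm_sub_lt_norm_one_sub_conj_mul (ha.trans_lt hm) (hb.trans_lt hm))
  have hD2 : ‖1 - conj a * b‖ ≤ 2 := by
    calc ‖1 - conj a * b‖ ≤ ‖(1 : ℂ)‖ + ‖conj a * b‖ := norm_sub_le _ _
      _ = 1 + ‖a‖ * ‖b‖ := by rw [norm_one, norm_mul, norm_conj]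
      _ ≤ 2 := by nlinarith [norm_nonneg a, norm_nonneg b]
  have hprod : (1 - m ^ 2) ^ 2 ≤ (1 - ‖a‖ ^ 2) * (1 - ‖b‖ ^ 2) := by
    have hm2 : 0 ≤ 1 - m ^ 2 := by nlinarith
    have h1 : 1 - m ^ 2 ≤ 1 - ‖a‖ ^ 2 := by nlinarith [norm_nonneg a]
    have h2 : 1 - m ^ 2 ≤ 1 - ‖b‖ ^ 2 := by nlinarith [norm_nonneg b]
    nlinarith [mul_le_mul h1 h2 hm2 (hm2.trans h1)]
  have hid := norm_one_sub_conj_mul_sq_sub_norm_sub_sq a b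
  rw [pseudoHyperbolicDist, norm_div, div_pow, div_le_iff₀ (by positivity)]
  nlinarith [mul_le_mul_of_nonneg_left hD2 (sq_nonneg (1 - m ^ 2))]

theorem pseudoHyperbolicDist_div_le {a b : ℂ} {m r : ℝ} (ha : ‖a‖ ≤ m) (hb : ‖b‖ ≤ m)
    (hmr : m < r) (hr : r ≤ 1) :
    pseudoHyperbolicDist (a / r) (b / r) ≤
      (1 - m ^ 2) / (r ^ 2 - m ^ 2) * pseudoHyperbolicDist a b := by
  have hm0 : 0 ≤ m := (norm_nonneg a).trans ha
  have hr0 : 0 < r := hm0.trans_lt hmr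
  have hD : 1 - m ^ 2 ≤ ‖1 - conj a * b‖ := by
    calc 1 - m ^ 2 ≤ ‖(1 : ℂ)‖ - ‖conj a * b‖ := by
          rw [norm_one, norm_mul, norm_conj]; nlinarith [norm_nonneg a, norm_nonneg b]
      _ ≤ ‖1 - conj a * b‖ := norm_sub_norm_le _ _
  have hE : ‖1 - conj a * b‖ - (1 - r ^ 2) ≤ ‖(r : ℂ) ^ 2 - conj a * b‖ := by
    have h1r : ‖(1 : ℂ) - (r : ℂ) ^ 2‖ = 1 - r ^ 2 := by
      rw [← ofReal_pow, ← ofReal_one, ← ofReal_sub, norm_real,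
        Real.norm_of_nonneg (by nlinarith)]
    have := norm_add_le ((1 : ℂ) - (r : ℂ) ^ 2) ((r : ℂ) ^ 2 - conj a * b)
    rw [sub_add_sub_cancel, h1r] at this
    linarith
  have hrescale : pseudoHyperbolicDist (a / r) (b / r) =
      r * ‖a - b‖ / ‖(r : ℂ) ^ 2 - conj a * b‖ := by
    have hrC : (r : ℂ) ≠ 0 := ofReal_ne_zero.2 hr0.ne'
    rw [pseudoHyperbolicDist, map_div₀, conj_ofReal,
      show (a / r - b / r) / (1 - conj a / r * (b / r)) = r * (a - b) / (r ^ 2 - conj a * b) by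
        field_simp, norm_div, norm_mul, norm_real, Real.norm_of_nonneg hr0.le]
  have hmr2 : 0 < r ^ 2 - m ^ 2 := by nlinarith
  have hkey :
      r * ‖1 - conj a * b‖ * (r ^ 2 - m ^ 2) ≤ (1 - m ^ 2) * ‖(r : ℂ) ^ 2 - conj a * b‖ := by
    have h1 : 0 ≤ (1 - r) * (‖1 - conj a * b‖ * (r ^ 2 - m ^ 2)) :=
      mul_nonneg (by linarith) (mul_nonneg (norm_nonneg _) hmr2.le)
    have h2 := mul_le_mul_of_nonneg_right hD (by nlinarith : (0 : ℝ) ≤ 1 - r ^ 2)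
    have h3 := mul_le_mul_of_nonneg_left hE (by nlinarith : (0 : ℝ) ≤ 1 - m ^ 2)
    nlinarith
  rw [hrescale, pseudoHyperbolicDist, norm_div, div_mul_div_comm,
    div_le_div_iff₀ (by nlinarith) (mul_pos hmr2 (by nlinarith))]
  nlinarith [mul_le_mul_of_nonneg_left hkey (norm_nonneg (a - b))]

theorem Real.hasDerivAt_artanh {x : ℝ} (hx : x ∈ Ioo (-1) 1) :
    HasDerivAt artanh (1 / (1 - x ^ 2)) x := by
  have h1 : 0 < 1 + x := by linarith [hx.1]
  have h2 : 0 < 1 - x := by linarith [hx.2]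
  have hloc : (fun t ↦ 1 / 2 * (log (1 + t) - log (1 - t))) =ᶠ[𝓝 x] artanh := by
    filter_upwards [isOpen_Ioo.mem_nhds hx] with t ht
    rw [artanh_eq_half_log (Ioo_subset_Icc_self ht),
      log_div (by linarith [ht.1]) (by linarith [ht.2])]
  have hd : HasDerivAt (fun t ↦ 1 / 2 * (log (1 + t) - log (1 - t)))
      (1 / 2 * (1 / (1 + x) - -1 / (1 - x))) x :=
    ((((hasDerivAt_id' x).const_add 1).log h1.ne').sub
      (((hasDerivAt_id' x).const_sub 1).log h2.ne')).const_mul _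
  have h3 : 1 - x ^ 2 ≠ 0 := by nlinarith
  rw [show 1 / (1 - x ^ 2) = 1 / 2 * (1 / (1 + x) - -1 / (1 - x)) by field_simp; ring]
  exact hd.congr_of_eventuallyEq hloc.symm

theorem artanh_mul_le {K c μ x : ℝ} (hK : 1 ≤ K) (hKμ : K ^ 2 * μ < 1)
    (hKc : K * (1 - μ) ≤ c * (1 - K ^ 2 * μ)) (hx : 0 ≤ x) (hxμ : x ^ 2 ≤ μ) :
    artanh (K * x) ≤ c * artanh x := by
  have hμ0 : 0 ≤ μ := (sq_nonneg x).trans hxμ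
  have hμ : μ < 1 := by nlinarith
  have hcK : K ≤ c := by
    by_contra! h
    nlinarith [mul_pos (sub_pos.2 h) (sub_pos.2 hKμ),
      mul_nonneg (by nlinarith : (0 : ℝ) ≤ K ^ 2 - 1) hμ0]
  have hdom : ∀ t ∈ Icc 0 x, t ∈ Ioo (-1) 1 ∧ K * t ∈ Ioo (-1) 1 := by
    intro t ht
    have ht2 : t ^ 2 ≤ μ := by nlinarith [ht.1, ht.2]
    exact ⟨⟨by linarith [ht.1], by nlinarith [ht.1]⟩, ⟨by nlinarith [ht.1], by nlinarith [ht.1]⟩⟩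
  let g t := c * artanh t - artanh (K * t)
  have hg : ∀ t ∈ Icc 0 x,
      HasDerivAt g (c * (1 / (1 - t ^ 2)) - 1 / (1 - (K * t) ^ 2) * K) t :=
    fun t ht ↦ ((hasDerivAt_artanh (hdom t ht).1).const_mul c).sub
      ((hasDerivAt_artanh (hdom t ht).2).comp t (hasDerivAt_const_mul K))
  have hmono : MonotoneOn g (Icc 0 x) := by
    refine monotoneOn_of_hasDerivWithinAt_nonneg (convex_Icc 0 x)
      (fun t ht ↦ (hg t ht).continuousAt.continuousWithinAt)
      (fun t ht ↦ (hg t (interior_subset ht)).hasDerivWithinAt) fun t ht ↦ ?_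
    rw [interior_Icc] at ht
    have ht2 : t ^ 2 ≤ μ := by nlinarith [ht.1, ht.2]
    have h1 : 0 < 1 - t ^ 2 := by nlinarith
    have h2 : 0 < 1 - (K * t) ^ 2 := by nlinarith
    -- both sides are affine in `t²` and the difference decreases, so the case `t² = μ` (`hKc`)
    -- suffices
    have hder : K * (1 - t ^ 2) ≤ c * (1 - (K * t) ^ 2) := by
      nlinarith [mul_le_mul_of_nonneg_left ht2 (by nlinarith : (0 : ℝ) ≤ c * K ^ 2 - K)]
    rw [sub_nonneg, mul_one_div, div_mul_eq_mul_div, one_mul, div_le_div_iff₀ h2 h1]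
    linarith
  have := hmono ⟨le_rfl, hx⟩ ⟨hx, le_rfl⟩ hx
  simp only [g, mul_zero, artanh_zero, sub_zero] at this
  linarith

theorem exists_one_lt_mul_one_sub_lt {c μ : ℝ} (hc : 1 < c) (hμ : μ < 1) :
    ∃ K > 1, K ^ 2 * μ < 1 ∧ K * (1 - μ) < c * (1 - K ^ 2 * μ) := by
  have hnear : ∀ᶠ K in 𝓝 (1 : ℝ), K ^ 2 * μ < 1 ∧ K * (1 - μ) < c * (1 - K ^ 2 * μ) :=
    (ContinuousAt.eventually_lt (by fun_prop) continuousAt_const (by simpa using hμ)).and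
      (ContinuousAt.eventually_lt (by fun_prop) (by fun_prop) (by nlinarith))
  obtain ⟨K, hK, hK1⟩ :=
    ((hnear.filter_mono (nhdsWithin_le_nhds (s := Ioi 1))).and self_mem_nhdsWithin).exists
  exact ⟨K, hK1, hK⟩

theorem exists_one_sub_sq_div_sq_sub_sq_eq {m K : ℝ} (hm0 : 0 ≤ m) (hm1 : m < 1)
    (hK : 1 < K) :
    ∃ r, m < r ∧ r < 1 ∧ (1 - m ^ 2) / (r ^ 2 - m ^ 2) = K := by
  have hm2 : 0 < 1 - m ^ 2 := by nlinarith
  have hKpos : 0 < (1 - m ^ 2) / K := by positivity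
  have hr2 : √(m ^ 2 + (1 - m ^ 2) / K) ^ 2 = m ^ 2 + (1 - m ^ 2) / K :=
    sq_sqrt (by positivity)
  refine ⟨√(m ^ 2 + (1 - m ^ 2) / K), (lt_sqrt hm0).2 (by linarith),
    (sqrt_lt' one_pos).2 (by linarith [div_lt_self hm2 hK]), ?_⟩
  rw [hr2, add_sub_cancel_left, div_div_cancel₀ hm2.ne']

theorem norm_ofReal_mul_lt {r : ℝ} {ζ : ℂ} (hr : 0 < r) (hζ : ‖ζ‖ < 1) :
    ‖(r : ℂ) * ζ‖ < r := by
  rw [norm_mul, norm_real, Real.norm_of_nonneg hr.le]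
  exact mul_lt_of_lt_one_right hr hζ

theorem norm_div_ofReal_lt_one {r : ℝ} {u : ℂ} (hr : 0 < r) (hu : ‖u‖ < r) :
    ‖u / r‖ < 1 := by
  rwa [norm_div, norm_real, Real.norm_of_nonneg hr.le, div_lt_one hr]

theorem exists_poincare_div_le {m c : ℝ} (hm0 : 0 ≤ m) (hm1 : m < 1) (hc : 1 < c) :
    ∃ r, m < r ∧ r < 1 ∧ ∀ a b : ℂ, ‖a‖ ≤ m → ‖b‖ ≤ m →
      poincare (a / r) (b / r) ≤ c * poincare a b := by
  obtain ⟨K, hK1, hKμ, hKc⟩ :=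
    exists_one_lt_mul_one_sub_lt hc (show 1 - (1 - m ^ 2) ^ 2 / 4 < 1 by
      nlinarith [pow_pos (show 0 < 1 - m ^ 2 by nlinarith) 2])
  obtain ⟨r, hmr, hr1, hK⟩ := exists_one_sub_sq_div_sq_sub_sq_eq hm0 hm1 hK1
  refine ⟨r, hmr, hr1, fun a b ha hb ↦ ?_⟩
  have hdiv : ∀ {u : ℂ}, ‖u‖ ≤ m → ‖u / r‖ < 1 :=
    fun hu ↦ norm_div_ofReal_lt_one (hm0.trans_lt hmr) (hu.trans_lt hmr)
  have hscale := pseudoHyperbolicDist_div_le ha hb hmr hr1.le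
  rw [hK] at hscale
  have hab := sq_pseudoHyperbolicDist_le ha hb hm1
  have hρ := pseudoHyperbolicDist_nonneg a b
  rw [poincare_eq_artanh (hdiv ha) (hdiv hb),
    poincare_eq_artanh (ha.trans_lt hm1) (hb.trans_lt hm1)]
  calc artanh (pseudoHyperbolicDist (a / r) (b / r))
      ≤ artanh (K * pseudoHyperbolicDist a b) :=
        artanh_le_artanh (by linarith [pseudoHyperbolicDist_nonneg (a / r) (b / r)])
          (by nlinarith [mul_le_mul_of_nonneg_left hab (sq_nonneg K)]) hscale
    _ ≤ c * artanh (pseudoHyperbolicDist a b) := artanh_mul_le hK1.le hKμ hKc.le hρ hab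

theorem mem_hypDisc_artanh_iff {p z : ℂ} {r : ℝ} (hp : ‖p‖ < 1) (hr0 : 0 ≤ r)
    (hr1 : r < 1) :
    z ∈ hypDisc p (artanh r) ↔ ‖z‖ < 1 ∧ ‖mobius p z‖ < r := by
  simp only [hypDisc, mem_ofPred_eq, mem_ball_zero_iff]
  refine and_congr_right fun hz ↦ ?_
  rw [poincare_eq_artanh hz hp, artanh_lt_artanh_iff
    ⟨by linarith [pseudoHyperbolicDist_nonneg z p], pseudoHyperbolicDist_lt_one hz hp⟩
    ⟨by linarith, hr1⟩, norm_mobius, pseudoHyperbolicDist_comm]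

theorem mapsTo_mobius_mul_hypDisc {p : ℂ} {r : ℝ} (hp : ‖p‖ < 1) (hr0 : 0 < r)
    (hr1 : r < 1) :
    MapsTo (fun ζ ↦ mobius p (r * ζ)) (ball 0 1) (hypDisc p (artanh r)) := by
  intro ζ hζ
  have hrζ := norm_ofReal_mul_lt hr0 (mem_ball_zero_iff.1 hζ)
  have hrζ1 := hrζ.trans hr1
  rw [mem_hypDisc_artanh_iff hp hr0.le hr1, mobius_mobius hp hrζ1]
  exact ⟨pseudoHyperbolicDist_lt_one hp hrζ1, hrζ⟩

/-- Schwarz–Pick lemma on the hyperbolic disc of radius `artanh r`, read in the chart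
`ζ ↦ mobius p (r * ζ)` from the unit disc. -/
theorem poincare_le_of_mapsTo_hypDisc {p : ℂ} {r : ℝ} {h : ℂ → ℂ} (hp : ‖p‖ < 1)
    (hr0 : 0 < r) (hr1 : r < 1) (hd : DifferentiableOn ℂ h (hypDisc p (artanh r)))
    (hh : MapsTo h (hypDisc p (artanh r)) (ball 0 1)) {z w : ℂ}
    (hz : z ∈ hypDisc p (artanh r)) (hw : w ∈ hypDisc p (artanh r)) :
    poincare (h z) (h w) ≤ poincare (mobius p z / r) (mobius p w / r) := by
  have hchart := mapsTo_mobius_mul_hypDisc hp hr0 hr1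
  have hchart_diff : DifferentiableOn ℂ (fun ζ ↦ mobius p (r * ζ)) (ball 0 1) :=
    (differentiableOn_mobius hp).comp (differentiable_id.const_mul _).differentiableOn
      fun _ hζ ↦
        mem_ball_zero_iff.2 ((norm_ofReal_mul_lt hr0 (mem_ball_zero_iff.1 hζ)).trans hr1)
  have hlift : ∀ {u : ℂ}, u ∈ hypDisc p (artanh r) →
      ‖mobius p u / r‖ < 1 ∧ h (mobius p (r * (mobius p u / r))) = h u := by
    intro u hu
    obtain ⟨hu1, hur⟩ := (mem_hypDisc_artanh_iff hp hr0.le hr1).1 hu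
    refine ⟨norm_div_ofReal_lt_one hr0 hur, ?_⟩
    rw [mul_div_cancel₀ _ (ofReal_ne_zero.2 hr0.ne'), mobius_mobius hp hu1]
  obtain ⟨hz', hhz⟩ := hlift hz
  obtain ⟨hw', hhw⟩ := hlift hw
  have := poincare_le_of_mapsTo_ball (hd.comp hchart_diff hchart) (hh.comp hchart) hz' hw'
  rwa [Function.comp_apply, Function.comp_apply, hhz, hhw] at this

/-- for all `c > 1` and `M > 0`, there exists `R > 0` such that for
every `p ∈ 𝔻` and all `z, w ∈ D^{hyp}(p, M)`, the intrinsic hyperbolic distance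
of `D^{hyp}(p, R)` (transported from the disc via any Riemann map `h`) satisfies
`k_{D^{hyp}(p,R)}(z, w) ≤ c·ω(z, w)`. -/
theorem hyp_dist_in_hyp_disc :
    ∀ c > (1:ℝ), ∀ M > (0:ℝ), ∃ R > (0:ℝ), ∀ p ∈ Metric.ball (0:ℂ) 1,
      ∀ h : ℂ → ℂ, DifferentiableOn ℂ h (hypDisc p R) →
        Set.BijOn h (hypDisc p R) (Metric.ball (0:ℂ) 1) →
        ∀ z ∈ hypDisc p M, ∀ w ∈ hypDisc p M,
          poincare (h z) (h w) ≤ c * poincare z w := by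
  intro c hc M hM
  have hm0 : 0 ≤ Real.tanh M := by
    rw [Real.tanh_eq_sinh_div_cosh]
    exact (div_pos (Real.sinh_pos_iff.2 hM) (Real.cosh_pos M)).le
  have hm1 := Real.tanh_lt_one M
  obtain ⟨r, hmr, hr1, hscale⟩ := exists_poincare_div_le hm0 hm1 hc
  have hr0 : 0 < r := hm0.trans_lt hmr
  refine ⟨artanh r, artanh_pos ⟨hr0, hr1⟩, fun p hp h hd hbij z hz w hw ↦ ?_⟩
  have hp1 : ‖p‖ < 1 := mem_ball_zero_iff.1 hp
  rw [← Real.artanh_tanh M, mem_hypDisc_artanh_iff hp1 hm0 hm1] at hz hw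
  have hsub : ∀ {u}, ‖u‖ < 1 ∧ ‖mobius p u‖ < Real.tanh M → u ∈ hypDisc p (artanh r) :=
    fun hu ↦ (mem_hypDisc_artanh_iff hp1 hr0.le hr1).2 ⟨hu.1, hu.2.trans hmr⟩
  calc poincare (h z) (h w) ≤ poincare (mobius p z / r) (mobius p w / r) :=
        poincare_le_of_mapsTo_hypDisc hp1 hr0 hr1 hd hbij.mapsTo (hsub hz) (hsub hw)
    _ ≤ c * poincare (mobius p z) (mobius p w) := hscale _ _ hz.2.le hw.2.le
    _ ≤ c * poincare z w := by
        gcongr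
        exact poincare_le_of_mapsTo_ball (differentiableOn_mobius hp1) (mapsTo_mobius hp1)
          hz.1 hw.1
end

section
/- Let (φ_t) be a one-parameter semigroup of holomorphic self-maps of 𝔻, not a group, and let Δ be a petal (a connected component of the interior of the backward invariant set). Then φ_t(Δ) = Δ for all t ≥ 0, and for each t ≥ 0 the restriction φ_t|_Δ is a (holomorphic) automorphism of Δ. -/
/-!
Injectivity and the semigroup law make every `φ_t` a bijection of `𝒲` onto itself; by the open
mapping theorem and continuity the same holds for the interior of `𝒲`. For `z` in the interior,
the orbit segment `{φ_s z | 0 ≤ s ≤ t}` is a connected subset of the interior joining `z` to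
`φ_t z`, so `φ_t` sends every point into its own component. A self-bijection of a set with this
property restricts to a bijection of each connected component.
-/

/-- The backward invariant set `𝒲 = ⋂_{t ≥ 0} φ_t(𝔻)` of a semigroup. -/
def bwdInv (φ : ℝ → ℂ → ℂ) : Set ℂ :=
  ⋂ t ∈ Set.Ici (0:ℝ), φ t '' Metric.ball (0:ℂ) 1

open Set Metric

local notation "𝔻" => Metric.ball (0 : ℂ) 1

section Topology

variable {X : Type*} [TopologicalSpace X] {f : X → X} {V : Set X}

theorem mapsTo_connectedComponentIn (hf : ∀ z ∈ V, f z ∈ connectedComponentIn V z) (x : X) :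
    MapsTo f (connectedComponentIn V x) (connectedComponentIn V x) := fun z hz => by
  rw [connectedComponentIn_eq hz]
  exact hf z (connectedComponentIn_subset _ _ hz)

theorem surjOn_connectedComponentIn (hsurj : SurjOn f V V)
    (hf : ∀ z ∈ V, f z ∈ connectedComponentIn V z) (x : X) :
    SurjOn f (connectedComponentIn V x) (connectedComponentIn V x) := by
  intro w hw
  obtain ⟨u, hu, rfl⟩ := hsurj (connectedComponentIn_subset _ _ hw)
  refine ⟨u, ?_, rfl⟩
  rw [connectedComponentIn_eq hw, ← connectedComponentIn_eq (hf u hu)]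
  exact mem_connectedComponentIn hu

theorem Set.MapsTo.interior_of_isOpen_image {D W : Set X}
    (hopen : ∀ s ⊆ D, IsOpen s → IsOpen (f '' s)) (hWD : W ⊆ D) (hW : MapsTo f W W) :
    MapsTo f (interior W) (interior W) :=
  mapsTo_iff_image_subset.mpr <| interior_maximal
    ((image_mono interior_subset).trans hW.image_subset)
    (hopen _ (interior_subset.trans hWD) isOpen_interior)

theorem Set.SurjOn.interior_of_injOn {D W : Set X} (hD : IsOpen D) (hcont : ContinuousOn f D)
    (hinj : InjOn f D) (hWD : W ⊆ D) (hW : SurjOn f W W) :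
    SurjOn f (interior W) (interior W) := by
  intro w hw
  obtain ⟨u, hu, rfl⟩ := hW (interior_subset hw)
  have hpreW : D ∩ f ⁻¹' interior W ⊆ W := by
    rintro x ⟨hxD, hx⟩
    obtain ⟨y, hy, hyx⟩ := hW (interior_subset hx)
    exact hinj hxD (hWD hy) hyx.symm ▸ hy
  have hpre : D ∩ f ⁻¹' interior W ⊆ interior W :=
    interior_maximal hpreW (hcont.isOpen_inter_preimage hD isOpen_interior)
  exact ⟨u, hpre ⟨hWD hu, hw⟩, rfl⟩

end Topology

theorem DifferentiableOn.isOpen_image_of_injOn {g : ℂ → ℂ} {U s : Set ℂ} (hU : IsOpen U)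
    (hUc : IsPreconnected U) (hg : DifferentiableOn ℂ g U) (hinj : InjOn g U) (hsU : s ⊆ U)
    (hs : IsOpen s) : IsOpen (g '' s) := by
  rcases (hg.analyticOnNhd hU).is_constant_or_isOpen hUc with ⟨w, hw⟩ | hopen
  · have hsub : U.Subsingleton := fun x hx y hy => hinj hx hy ((hw x hx).trans (hw y hy).symm)
    rcases hsub.eq_empty_or_singleton with rfl | ⟨x, rfl⟩
    · simp [subset_empty_iff.mp hsU]
    · exact absurd hU (not_isOpen_singleton x)
  · exact hopen s hsU hs

section Semigroup

variable {φ : ℝ → ℂ → ℂ}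

theorem mem_bwdInv_iff {w : ℂ} : w ∈ bwdInv φ ↔ ∀ t ≥ (0:ℝ), w ∈ φ t '' 𝔻 := by
  simp [bwdInv]

theorem bwdInv_subset_ball (hid : ∀ z ∈ 𝔻, φ 0 z = z) : bwdInv φ ⊆ 𝔻 := by
  intro w hw
  obtain ⟨z, hz, rfl⟩ := mem_bwdInv_iff.mp hw 0 le_rfl
  rwa [hid z hz]

theorem mapsTo_bwdInv (hmaps : ∀ t ≥ (0:ℝ), MapsTo (φ t) 𝔻 𝔻)
    (hsem : ∀ s ≥ (0:ℝ), ∀ t ≥ (0:ℝ), ∀ z ∈ 𝔻, φ s (φ t z) = φ (s + t) z)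
    (hid : ∀ z ∈ 𝔻, φ 0 z = z) {t : ℝ} (ht : 0 ≤ t) : MapsTo (φ t) (bwdInv φ) (bwdInv φ) := by
  intro w hw
  have hwD : w ∈ 𝔻 := bwdInv_subset_ball hid hw
  refine mem_bwdInv_iff.mpr fun s hs => ?_
  rcases le_total s t with hst | hts
  · refine ⟨φ (t - s) w, hmaps _ (sub_nonneg.mpr hst) hwD, ?_⟩
    rw [hsem s hs (t - s) (sub_nonneg.mpr hst) w hwD, add_sub_cancel]
  · obtain ⟨u, hu, rfl⟩ := mem_bwdInv_iff.mp hw (s - t) (sub_nonneg.mpr hts)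
    exact ⟨u, hu, by rw [hsem t ht (s - t) (sub_nonneg.mpr hts) u hu, add_sub_cancel]⟩

theorem surjOn_bwdInv (hmaps : ∀ t ≥ (0:ℝ), MapsTo (φ t) 𝔻 𝔻)
    (hinj : ∀ t ≥ (0:ℝ), InjOn (φ t) 𝔻)
    (hsem : ∀ s ≥ (0:ℝ), ∀ t ≥ (0:ℝ), ∀ z ∈ 𝔻, φ s (φ t z) = φ (s + t) z)
    {t : ℝ} (ht : 0 ≤ t) : SurjOn (φ t) (bwdInv φ) (bwdInv φ) := by
  intro w hw
  obtain ⟨u, hu, rfl⟩ := mem_bwdInv_iff.mp hw t ht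
  refine ⟨u, mem_bwdInv_iff.mpr fun s hs => ?_, rfl⟩
  obtain ⟨v, hv, hvw⟩ := mem_bwdInv_iff.mp hw (t + s) (add_nonneg ht hs)
  rw [← hsem t ht s hs v hv] at hvw
  exact ⟨v, hv, hinj t ht (hmaps s hs hv) hu hvw⟩

theorem mapsTo_interior_bwdInv (hmaps : ∀ t ≥ (0:ℝ), MapsTo (φ t) 𝔻 𝔻)
    (hholo : ∀ t ≥ (0:ℝ), DifferentiableOn ℂ (φ t) 𝔻)
    (hinj : ∀ t ≥ (0:ℝ), InjOn (φ t) 𝔻)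
    (hsem : ∀ s ≥ (0:ℝ), ∀ t ≥ (0:ℝ), ∀ z ∈ 𝔻, φ s (φ t z) = φ (s + t) z)
    (hid : ∀ z ∈ 𝔻, φ 0 z = z) {t : ℝ} (ht : 0 ≤ t) :
    MapsTo (φ t) (interior (bwdInv φ)) (interior (bwdInv φ)) :=
  (mapsTo_bwdInv hmaps hsem hid ht).interior_of_isOpen_image
    (fun _ => (hholo t ht).isOpen_image_of_injOn isOpen_ball (convex_ball 0 1).isPreconnected
      (hinj t ht))
    (bwdInv_subset_ball hid)

theorem surjOn_interior_bwdInv (hmaps : ∀ t ≥ (0:ℝ), MapsTo (φ t) 𝔻 𝔻)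
    (hholo : ∀ t ≥ (0:ℝ), DifferentiableOn ℂ (φ t) 𝔻)
    (hinj : ∀ t ≥ (0:ℝ), InjOn (φ t) 𝔻)
    (hsem : ∀ s ≥ (0:ℝ), ∀ t ≥ (0:ℝ), ∀ z ∈ 𝔻, φ s (φ t z) = φ (s + t) z)
    (hid : ∀ z ∈ 𝔻, φ 0 z = z) {t : ℝ} (ht : 0 ≤ t) :
    SurjOn (φ t) (interior (bwdInv φ)) (interior (bwdInv φ)) :=
  (surjOn_bwdInv hmaps hinj hsem ht).interior_of_injOn isOpen_ball (hholo t ht).continuousOn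
    (hinj t ht) (bwdInv_subset_ball hid)

theorem mem_connectedComponentIn_of_mapsTo {V : Set ℂ}
    (hV : ∀ s ≥ (0:ℝ), MapsTo (φ s) V V) (hVD : V ⊆ 𝔻) (hid : ∀ z ∈ 𝔻, φ 0 z = z)
    (hcont : ContinuousOn (fun p : ℝ × ℂ => φ p.1 p.2) (Ici (0:ℝ) ×ˢ 𝔻))
    {t : ℝ} (ht : 0 ≤ t) {z : ℂ} (hz : z ∈ V) : φ t z ∈ connectedComponentIn V z := by
  have horbit : ContinuousOn (fun s => φ s z) (Icc 0 t) :=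
    hcont.comp (Continuous.prodMk_left z).continuousOn
      fun s hs => mk_mem_prod hs.1 (hVD hz)
  have hsub : (fun s => φ s z) '' Icc 0 t ⊆ connectedComponentIn V z := by
    refine (isPreconnected_Icc.image _ horbit).subset_connectedComponentIn
      ⟨0, left_mem_Icc.mpr ht, hid z (hVD hz)⟩ ?_
    rintro _ ⟨s, hs, rfl⟩
    exact hV s hs.1 hz
  exact hsub ⟨t, right_mem_Icc.mpr ht, rfl⟩

end Semigroup

theorem petal_invariance_general (φ : ℝ → ℂ → ℂ)
    (hmaps : ∀ t ≥ (0:ℝ), Set.MapsTo (φ t) (Metric.ball (0:ℂ) 1) (Metric.ball (0:ℂ) 1))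
    (hholo : ∀ t ≥ (0:ℝ), DifferentiableOn ℂ (φ t) (Metric.ball (0:ℂ) 1))
    (hinj : ∀ t ≥ (0:ℝ), Set.InjOn (φ t) (Metric.ball (0:ℂ) 1))
    (hsem : ∀ s ≥ (0:ℝ), ∀ t ≥ (0:ℝ), ∀ z ∈ Metric.ball (0:ℂ) 1, φ s (φ t z) = φ (s + t) z)
    (hid : ∀ z ∈ Metric.ball (0:ℂ) 1, φ 0 z = z)
    (hcont : ContinuousOn (fun p : ℝ × ℂ => φ p.1 p.2)
      (Set.Ici (0:ℝ) ×ˢ Metric.ball (0:ℂ) 1))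
    (Δ : Set ℂ) (z₀ : ℂ)
    (hΔ : Δ = connectedComponentIn (interior (bwdInv φ)) z₀) :
    ∀ t ≥ (0:ℝ), φ t '' Δ = Δ ∧ Set.BijOn (φ t) Δ Δ := by
  intro t ht
  have hVD : interior (bwdInv φ) ⊆ 𝔻 := interior_subset.trans (bwdInv_subset_ball hid)
  have hcomp : ∀ z ∈ interior (bwdInv φ), φ t z ∈ connectedComponentIn (interior (bwdInv φ)) z :=
    fun _ => mem_connectedComponentIn_of_mapsTo
      (fun _ hs => mapsTo_interior_bwdInv hmaps hholo hinj hsem hid hs) hVD hid hcont ht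
  have hbij : BijOn (φ t) Δ Δ := by
    subst hΔ
    exact ⟨mapsTo_connectedComponentIn hcomp z₀,
      (hinj t ht).mono ((connectedComponentIn_subset _ _).trans hVD),
      surjOn_connectedComponentIn (surjOn_interior_bwdInv hmaps hholo hinj hsem hid ht) hcomp z₀⟩
  exact ⟨hbij.image_eq, hbij⟩

/-- if `(φ_t)` is a semigroup of holomorphic self-maps of `𝔻`, not a
group, and `Δ` is a petal (a nonempty connected component of the interior of the
backward invariant set `𝒲`), then `φ_t(Δ) = Δ` for all `t ≥ 0` and each `φ_t`
restricts to a (holomorphic) automorphism of `Δ`. -/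
theorem petal_invariance (φ : ℝ → ℂ → ℂ)
    (hmaps : ∀ t ≥ (0:ℝ), Set.MapsTo (φ t) (Metric.ball (0:ℂ) 1) (Metric.ball (0:ℂ) 1))
    (hholo : ∀ t ≥ (0:ℝ), DifferentiableOn ℂ (φ t) (Metric.ball (0:ℂ) 1))
    (hinj : ∀ t ≥ (0:ℝ), Set.InjOn (φ t) (Metric.ball (0:ℂ) 1))
    (hsem : ∀ s ≥ (0:ℝ), ∀ t ≥ (0:ℝ), ∀ z ∈ Metric.ball (0:ℂ) 1, φ s (φ t z) = φ (s + t) z)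
    (hid : ∀ z ∈ Metric.ball (0:ℂ) 1, φ 0 z = z)
    (hcont : ContinuousOn (fun p : ℝ × ℂ => φ p.1 p.2)
      (Set.Ici (0:ℝ) ×ˢ Metric.ball (0:ℂ) 1))
    (hng : ∃ t ≥ (0:ℝ), φ t '' Metric.ball (0:ℂ) 1 ≠ Metric.ball (0:ℂ) 1)
    (Δ : Set ℂ) (z₀ : ℂ) (hz₀ : z₀ ∈ interior (bwdInv φ))
    (hΔ : Δ = connectedComponentIn (interior (bwdInv φ)) z₀) :
    ∀ t ≥ (0:ℝ), φ t '' Δ = Δ ∧ Set.BijOn (φ t) Δ Δ :=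
  petal_invariance_general φ hmaps hholo hinj hsem hid hcont Δ z₀ hΔ
end

section
/- Let g : 𝔻 → 𝔻 be holomorphic with angular limit g(z) → σ as z → σ for some σ ∈ ∂𝔻. Then g has finite angular derivative at σ (is regular at σ) if and only if liminf_{z→σ} (1-|g(z)|)/(1-|z|) < +∞; and in that case the angular limit of (σ - g(z))/(σ - z) equals this liminf. -/
/-!
Write `u z = (1 - ‖g z‖) / (1 - ‖z‖)` and `α = liminf_{z → σ} u z`. Along the radius,
`u (rσ) ≤ ‖σ - g (rσ)‖ / ‖σ - rσ‖`, so an angular limit `L` forces `α ≤ ‖L‖ < ∞`.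

Conversely, let `α < ∞`. Letting `z₀ → σ` along points where `u z₀ → α` in the Schwarz–Pick
inequality gives Julia's lemma `Re W z ≤ α Re W (g z)`, where `W z = (σ + z) / (σ - z)` maps the
disc onto the right half-plane `H` and `σ` to `∞` (the boundary point `g z₀` tends to must be `σ`,
because `g → σ` non-tangentially). Conjugated by `W`, `g` becomes a holomorphic `Φ : H → H` with
`β := inf Re Φ w / Re w ≥ 1 / α`. A Harnack estimate for `Φ w - (β - η) w` shows `Φ w / w → β`
as `w → ∞` in every sector `c ‖w‖ ≤ Re w`, and `W` maps Stolz regions into such sectors. As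
`(σ - g z) / (σ - z) = (W z + 1) / (Φ (W z) + 1)`, the angular limit exists and equals
`1 / β ≤ α`; the radial bound gives equality.
-/

open Filter

/-- The Stolz region `S(σ, M) = {z ∈ 𝔻 : |σ - z| < M(1-|z|)}`. -/
def stolz (σ : ℂ) (M : ℝ) : Set ℂ :=
  {z ∈ Metric.ball (0:ℂ) 1 | ‖σ - z‖ < M * (1 - ‖z‖)}

open Topology Metric Set Bornology ComplexConjugate

namespace AngularDerivative

lemma one_sub_conj_mul_ne_zero {a z : ℂ} (ha : ‖a‖ < 1) (hz : ‖z‖ ≤ 1) :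
    1 - conj a * z ≠ 0 := by
  refine sub_ne_zero.2 fun h => ?_
  have := congrArg norm h
  rw [norm_one, norm_mul, Complex.norm_conj] at this
  nlinarith [norm_nonneg a, norm_nonneg z]

lemma sq_norm_one_sub_conj_mul_sub (a z : ℂ) :
    ‖1 - conj a * z‖ ^ 2 - ‖z - a‖ ^ 2 = (1 - ‖a‖ ^ 2) * (1 - ‖z‖ ^ 2) := by
  simp only [Complex.sq_norm, Complex.normSq_apply, Complex.sub_re, Complex.sub_im,
    Complex.mul_re, Complex.mul_im, Complex.conj_re, Complex.conj_im, Complex.one_re,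
    Complex.one_im]
  ring

noncomputable def moebius (a z : ℂ) : ℂ := (z - a) / (1 - conj a * z)

lemma one_sub_sq_norm_moebius {a z : ℂ} (ha : ‖a‖ < 1) (hz : ‖z‖ ≤ 1) :
    1 - ‖moebius a z‖ ^ 2 = (1 - ‖a‖ ^ 2) * (1 - ‖z‖ ^ 2) / ‖1 - conj a * z‖ ^ 2 := by
  have hden : ‖1 - conj a * z‖ ≠ 0 := norm_ne_zero_iff.2 (one_sub_conj_mul_ne_zero ha hz)
  rw [moebius, norm_div, div_pow, ← sq_norm_one_sub_conj_mul_sub, sub_div,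
    div_self (pow_ne_zero 2 hden)]

lemma norm_moebius_lt_one {a z : ℂ} (ha : ‖a‖ < 1) (hz : ‖z‖ < 1) : ‖moebius a z‖ < 1 := by
  have h := one_sub_sq_norm_moebius ha hz.le
  have : 0 < (1 - ‖a‖ ^ 2) * (1 - ‖z‖ ^ 2) / ‖1 - conj a * z‖ ^ 2 := by
    have := norm_pos_iff.2 (one_sub_conj_mul_ne_zero ha hz.le)
    have : ‖a‖ ^ 2 < 1 := by nlinarith [norm_nonneg a]
    have : ‖z‖ ^ 2 < 1 := by nlinarith [norm_nonneg z]
    apply div_pos <;> nlinarith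
  nlinarith [norm_nonneg (moebius a z)]

lemma mapsTo_moebius {a : ℂ} (ha : ‖a‖ < 1) : MapsTo (moebius a) (ball 0 1) (ball 0 1) :=
  fun _ hz => mem_ball_zero_iff.2 (norm_moebius_lt_one ha (mem_ball_zero_iff.1 hz))

lemma differentiableOn_moebius {a : ℂ} (ha : ‖a‖ < 1) :
    DifferentiableOn ℂ (moebius a) (ball 0 1) :=
  (differentiableOn_id.sub_const a).div ((differentiableOn_const 1).sub
    (differentiableOn_id.const_mul _)) fun _ hz =>
      one_sub_conj_mul_ne_zero ha (mem_ball_zero_iff.1 hz).le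

lemma moebius_neg_moebius {a z : ℂ} (ha : ‖a‖ < 1) (hz : ‖z‖ < 1) :
    moebius (-a) (moebius a z) = z := by
  have hD := one_sub_conj_mul_ne_zero ha hz.le
  have ha' := one_sub_conj_mul_ne_zero ha ha.le
  have hnum : moebius a z - -a = z * (1 - conj a * a) / (1 - conj a * z) := by
    rw [moebius, sub_neg_eq_add, div_add' _ _ _ hD]
    ring_nf
  have hden : 1 - conj (-a) * moebius a z = (1 - conj a * a) / (1 - conj a * z) := by
    rw [moebius, map_neg, neg_mul, sub_neg_eq_add, mul_div_assoc', one_add_div hD]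
    ring_nf
  rw [moebius, hnum, hden, div_div_div_cancel_right₀ hD, mul_div_cancel_right₀ _ ha']

/-- The Schwarz–Pick lemma, in terms of the pseudo-hyperbolic distance `‖moebius z₀ z‖`. -/
lemma norm_moebius_le_of_mapsTo_ball {f : ℂ → ℂ} (hf : DifferentiableOn ℂ f (ball 0 1))
    (hmaps : MapsTo f (ball 0 1) (ball 0 1)) {z₀ z : ℂ} (hz₀ : z₀ ∈ ball 0 1)
    (hz : z ∈ ball 0 1) : ‖moebius (f z₀) (f z)‖ ≤ ‖moebius z₀ z‖ := by
  rw [mem_ball_zero_iff] at hz₀ hz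
  have hfz₀ : ‖f z₀‖ < 1 := mem_ball_zero_iff.1 (hmaps (mem_ball_zero_iff.2 hz₀))
  have hz₀' : ‖-z₀‖ < 1 := by rwa [norm_neg]
  have hinner : MapsTo (moebius (-z₀)) (ball 0 1) (ball 0 1) := mapsTo_moebius hz₀'
  have h := Complex.norm_le_norm_of_mapsTo_ball
    (f := moebius (f z₀) ∘ f ∘ moebius (-z₀))
    ((differentiableOn_moebius hfz₀).comp (hf.comp (differentiableOn_moebius hz₀') hinner)
      (hmaps.comp hinner))
    (((mapsTo_moebius hfz₀).comp (hmaps.comp hinner)).mono_right ball_subset_closedBall)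
    (by simp [moebius]) (norm_moebius_lt_one hz₀ hz)
  simpa only [Function.comp_apply, moebius_neg_moebius hz₀ hz] using h

lemma schwarz_pick {f : ℂ → ℂ} (hf : DifferentiableOn ℂ f (ball 0 1))
    (hmaps : MapsTo f (ball 0 1) (ball 0 1)) {z₀ z : ℂ} (hz₀ : z₀ ∈ ball 0 1)
    (hz : z ∈ ball 0 1) :
    (1 - ‖z₀‖ ^ 2) * (1 - ‖z‖ ^ 2) / ‖1 - conj z₀ * z‖ ^ 2
      ≤ (1 - ‖f z₀‖ ^ 2) * (1 - ‖f z‖ ^ 2) / ‖1 - conj (f z₀) * f z‖ ^ 2 := by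
  have h := norm_moebius_le_of_mapsTo_ball hf hmaps hz₀ hz
  rw [mem_ball_zero_iff] at hz₀ hz
  rw [← one_sub_sq_norm_moebius hz₀ hz.le,
    ← one_sub_sq_norm_moebius (mem_ball_zero_iff.1 (hmaps (mem_ball_zero_iff.2 hz₀)))
      (mem_ball_zero_iff.1 (hmaps (mem_ball_zero_iff.2 hz))).le]
  gcongr

lemma sq_norm_add_conj_sub_sq_norm_sub (u v : ℂ) :
    ‖u + conj v‖ ^ 2 - ‖u - v‖ ^ 2 = 4 * (u.re * v.re) := by
  simp only [Complex.sq_norm, Complex.normSq_apply, Complex.add_re, Complex.add_im,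
    Complex.sub_re, Complex.sub_im, Complex.conj_re, Complex.conj_im]
  ring

lemma add_conj_ne_zero {u v : ℂ} (hu : 0 < u.re) (hv : 0 < v.re) : u + conj v ≠ 0 := by
  refine fun h => (add_pos hu hv).ne' ?_
  simpa using congrArg Complex.re h

/-- For `‖σ‖ = 1` this maps the unit disc onto the right half-plane and `σ` to `∞`; its real part
is the Poisson kernel `(1 - ‖z‖²) / ‖σ - z‖²`, whose level sets are the horocycles at `σ`. -/
noncomputable def cayley (σ z : ℂ) : ℂ := (σ + z) / (σ - z)

noncomputable def cayleyInv (σ w : ℂ) : ℂ := σ * (w - 1) / (w + 1)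

lemma sub_ne_zero_of_norm_lt {σ z : ℂ} (hσ : ‖σ‖ = 1) (hz : ‖z‖ < 1) : σ - z ≠ 0 :=
  sub_ne_zero.2 fun h => by rw [h] at hσ; linarith

lemma norm_one_sub_conj_mul {σ : ℂ} (hσ : ‖σ‖ = 1) (z : ℂ) : ‖1 - conj σ * z‖ = ‖σ - z‖ := by
  have : 1 - conj σ * z = conj σ * (σ - z) := by
    rw [mul_sub, Complex.conj_mul', hσ]; push_cast; ring
  rw [this, norm_mul, Complex.norm_conj, hσ, one_mul]

lemma re_cayley {σ : ℂ} (hσ : ‖σ‖ = 1) (z : ℂ) :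
    (cayley σ z).re = (1 - ‖z‖ ^ 2) / ‖σ - z‖ ^ 2 := by
  have h1 : σ.re * σ.re + σ.im * σ.im = 1 := by
    rw [← Complex.normSq_apply, ← Complex.sq_norm, hσ, one_pow]
  rw [cayley, Complex.div_re, ← add_div, Complex.sq_norm, Complex.sq_norm]
  congr 1
  simp only [Complex.normSq_apply, Complex.add_re, Complex.add_im, Complex.sub_re,
    Complex.sub_im]
  linear_combination h1

lemma re_cayley_pos {σ z : ℂ} (hσ : ‖σ‖ = 1) (hz : ‖z‖ < 1) : 0 < (cayley σ z).re := by
  rw [re_cayley hσ]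
  have := norm_pos_iff.2 (sub_ne_zero_of_norm_lt hσ hz)
  have : ‖z‖ ^ 2 < 1 := by nlinarith [norm_nonneg z]
  apply div_pos <;> nlinarith

lemma norm_cayleyInv_lt_one {σ w : ℂ} (hσ : ‖σ‖ = 1) (hw : 0 < w.re) :
    ‖cayleyInv σ w‖ < 1 := by
  have h := sq_norm_add_conj_sub_sq_norm_sub w 1
  rw [map_one, Complex.one_re, mul_one] at h
  have : ‖w - 1‖ < ‖w + 1‖ := by nlinarith [norm_nonneg (w - 1), norm_nonneg (w + 1)]
  rw [cayleyInv, norm_div, norm_mul, hσ, one_mul, div_lt_one (by linarith [norm_nonneg (w - 1)])]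
  exact this

lemma mapsTo_cayley {σ : ℂ} (hσ : ‖σ‖ = 1) : MapsTo (cayley σ) (ball 0 1) {w | 0 < w.re} :=
  fun _ hz => re_cayley_pos hσ (mem_ball_zero_iff.1 hz)

lemma mapsTo_cayleyInv {σ : ℂ} (hσ : ‖σ‖ = 1) : MapsTo (cayleyInv σ) {w | 0 < w.re} (ball 0 1) :=
  fun _ hw => mem_ball_zero_iff.2 (norm_cayleyInv_lt_one hσ hw)

lemma add_one_ne_zero_of_re_pos {w : ℂ} (hw : 0 < w.re) : w + 1 ≠ 0 := by
  simpa using add_conj_ne_zero hw (v := 1) (by simp)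

lemma differentiableOn_cayley {σ : ℂ} (hσ : ‖σ‖ = 1) :
    DifferentiableOn ℂ (cayley σ) (ball 0 1) :=
  (differentiableOn_id.const_add σ).div (differentiableOn_id.const_sub σ) fun _ hz =>
    sub_ne_zero_of_norm_lt hσ (mem_ball_zero_iff.1 hz)

lemma differentiableOn_cayleyInv (σ : ℂ) :
    DifferentiableOn ℂ (cayleyInv σ) {w | 0 < w.re} :=
  ((differentiableOn_id.sub_const 1).const_mul σ).div (differentiableOn_id.add_const 1)
    fun _ hw => add_one_ne_zero_of_re_pos hw

lemma cayley_cayleyInv {σ w : ℂ} (hσ : σ ≠ 0) (hw : w + 1 ≠ 0) :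
    cayley σ (cayleyInv σ w) = w := by
  rw [cayley, cayleyInv]
  field_simp
  ring

lemma cayley_add_one {σ z : ℂ} (hz : σ - z ≠ 0) : cayley σ z + 1 = 2 * σ / (σ - z) := by
  rw [cayley, div_add_one hz]
  ring

lemma cayleyInv_cayley {σ z : ℂ} (hσ : σ ≠ 0) (hz : σ - z ≠ 0) :
    cayleyInv σ (cayley σ z) = z := by
  rw [cayleyInv, cayley_add_one hz, cayley]
  field_simp
  ring

lemma sub_div_sub_eq {σ z w : ℂ} (hσ : σ ≠ 0) (hz : σ - z ≠ 0) (hw : σ - w ≠ 0) :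
    (σ - w) / (σ - z) = (cayley σ z + 1) / (cayley σ w + 1) := by
  rw [cayley_add_one hz, cayley_add_one hw]
  field_simp

lemma norm_moebius_cayleyInv {u v : ℂ} (hu : 0 < u.re) (hv : 0 < v.re) :
    ‖moebius (cayleyInv 1 v) (cayleyInv 1 u)‖ = ‖u - v‖ / ‖u + conj v‖ := by
  have hu1 := add_one_ne_zero_of_re_pos hu
  have hv1 := add_one_ne_zero_of_re_pos hv
  have hv1' : conj v + 1 ≠ 0 := by simpa using (map_ne_zero conj).2 hv1
  have huv := add_conj_ne_zero hu hv
  have hnum : cayleyInv 1 u - cayleyInv 1 v = 2 * (u - v) / ((u + 1) * (v + 1)) := by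
    rw [cayleyInv, cayleyInv]; field_simp; ring
  have hden : 1 - conj (cayleyInv 1 v) * cayleyInv 1 u
      = 2 * (u + conj v) / ((conj v + 1) * (u + 1)) := by
    rw [cayleyInv, cayleyInv]; simp only [map_div₀, map_mul, map_sub, map_add, map_one]
    field_simp; ring
  have : moebius (cayleyInv 1 v) (cayleyInv 1 u)
      = (u - v) / (u + conj v) * ((conj v + 1) / (v + 1)) := by
    rw [moebius, hnum, hden]; field_simp
  rw [this, norm_mul, norm_div (conj v + 1), ← map_one conj, ← map_add, Complex.norm_conj,
    map_one, div_self (norm_ne_zero_iff.2 hv1), mul_one, norm_div]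

/-- The Schwarz–Pick lemma for the right half-plane: conjugate by `cayley 1`. -/
lemma schwarz_pick_halfPlane {F : ℂ → ℂ} (hF : DifferentiableOn ℂ F {w | 0 < w.re})
    (hmaps : MapsTo F {w | 0 < w.re} {w | 0 < w.re}) {w₀ w : ℂ} (hw₀ : 0 < w₀.re)
    (hw : 0 < w.re) :
    ‖F w - F w₀‖ / ‖F w + conj (F w₀)‖ ≤ ‖w - w₀‖ / ‖w + conj w₀‖ := by
  have hc := mapsTo_cayley (σ := 1) norm_one
  have h := norm_moebius_le_of_mapsTo_ball (f := cayleyInv 1 ∘ F ∘ cayley 1)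
    ((differentiableOn_cayleyInv 1).comp (hF.comp (differentiableOn_cayley norm_one) hc)
      (hmaps.comp hc))
    ((mapsTo_cayleyInv norm_one).comp (hmaps.comp hc))
    (mapsTo_cayleyInv norm_one hw₀) (mapsTo_cayleyInv norm_one hw)
  simp only [Function.comp_apply, cayley_cayleyInv one_ne_zero (add_one_ne_zero_of_re_pos hw),
    cayley_cayleyInv one_ne_zero (add_one_ne_zero_of_re_pos hw₀)] at h
  rwa [norm_moebius_cayleyInv hw hw₀, norm_moebius_cayleyInv (hmaps hw) (hmaps hw₀)] at h

lemma norm_mul_sq_sub_sq_le {u : ℂ} {x D N : ℝ} (hx : 0 ≤ x) (hD : 0 ≤ D) (hN : 0 ≤ N)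
    (h : ‖u - x‖ * D ≤ N * ‖u + x‖) : ‖u‖ * (D ^ 2 - N ^ 2) ≤ x * (D + N) ^ 2 := by
  have h₁ := norm_sub_norm_le u x
  have h₂ := norm_add_le u x
  rw [Complex.norm_of_nonneg hx] at h₁ h₂
  have : ‖u‖ * (D - N) ≤ x * (D + N) := by nlinarith [norm_nonneg u]
  nlinarith

lemma harnack_halfPlane {F : ℂ → ℂ} (hF : DifferentiableOn ℂ F {w | 0 < w.re})
    (hmaps : MapsTo F {w | 0 < w.re} {w | 0 < w.re}) {w₀ w : ℂ} (hw₀ : 0 < w₀.re)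
    (hw : 0 < w.re) :
    ‖F w - (F w₀).im * Complex.I‖ * (w.re * w₀.re) ≤ (F w₀).re * (‖w‖ + ‖w₀‖) ^ 2 := by
  set u := F w - (F w₀).im * Complex.I
  have hsub : F w - F w₀ = u - (F w₀).re := by
    apply Complex.ext <;> simp [u]
  have hadd : F w + conj (F w₀) = u + (F w₀).re := by
    apply Complex.ext <;> simp [u, sub_eq_add_neg]
  have hSP := schwarz_pick_halfPlane hF hmaps hw₀ hw
  rw [div_le_div_iff₀ (norm_pos_iff.2 (add_conj_ne_zero (hmaps hw) (hmaps hw₀)))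
    (norm_pos_iff.2 (add_conj_ne_zero hw hw₀)), hsub, hadd] at hSP
  have key := norm_mul_sq_sub_sq_le (hmaps hw₀).le (norm_nonneg _) (norm_nonneg _) hSP
  rw [sq_norm_add_conj_sub_sq_norm_sub] at key
  have hDN : ‖w + conj w₀‖ + ‖w - w₀‖ ≤ 2 * (‖w‖ + ‖w₀‖) := by
    linarith [norm_add_le w (conj w₀), norm_sub_le w w₀, Complex.norm_conj w₀]
  have := mul_le_mul_of_nonneg_left
    (pow_le_pow_left₀ (by positivity) hDN 2) (hmaps hw₀).le
  nlinarith

lemma norm_le_of_mem_sector {F : ℂ → ℂ} (hF : DifferentiableOn ℂ F {w | 0 < w.re})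
    (hmaps : MapsTo F {w | 0 < w.re} {w | 0 < w.re}) {c : ℝ} (hc : 0 < c) {w₀ w : ℂ}
    (hw₀ : 0 < w₀.re) (hw : 0 < w.re) (hsector : c * ‖w‖ ≤ w.re) (hw₀w : ‖w₀‖ ≤ ‖w‖) :
    ‖F w‖ ≤ 4 * (F w₀).re / (c * w₀.re) * ‖w‖ + |(F w₀).im| := by
  have hH := harnack_halfPlane hF hmaps hw₀ hw
  have hx : 0 < (F w₀).re := hmaps hw₀
  have hwpos : 0 < ‖w‖ := (Complex.re_le_norm w).trans_lt' hw
  set N := ‖F w - (F w₀).im * Complex.I‖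
  have hN : N * (c * w₀.re) * ‖w‖ ≤ 4 * (F w₀).re * ‖w‖ * ‖w‖ :=
    calc N * (c * w₀.re) * ‖w‖ = N * (c * ‖w‖ * w₀.re) := by ring
      _ ≤ N * (w.re * w₀.re) := by gcongr
      _ ≤ (F w₀).re * (‖w‖ + ‖w₀‖) ^ 2 := hH
      _ ≤ (F w₀).re * (2 * ‖w‖) ^ 2 := by gcongr; linarith
      _ = 4 * (F w₀).re * ‖w‖ * ‖w‖ := by ring
  have : N ≤ 4 * (F w₀).re / (c * w₀.re) * ‖w‖ := by
    rw [div_mul_eq_mul_div, le_div_iff₀ (by positivity)]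
    exact le_of_mul_le_mul_right hN hwpos
  calc ‖F w‖ ≤ ‖F w - (F w₀).im * Complex.I‖ + ‖((F w₀).im : ℂ) * Complex.I‖ :=
        norm_le_norm_sub_add _ _
    _ ≤ _ := by simpa using this

lemma isLittleO_sub_mul_of_isGLB {Φ : ℂ → ℂ} (hΦ : DifferentiableOn ℂ Φ {w | 0 < w.re})
    {β : ℝ} (hβ : IsGLB ((fun w => (Φ w).re / w.re) '' {w | 0 < w.re}) β) {c : ℝ}
    (hc : 0 < c) :
    (fun w => Φ w - β * w) =o[cobounded ℂ ⊓ 𝓟 {w | c * ‖w‖ ≤ w.re}] id := by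
  refine Asymptotics.IsLittleO.of_bound fun ε hε => ?_
  -- `F = Φ - (β - η) id` still maps into `H`, and `w₀` is nearly extremal for it;
  -- `η` is chosen so that `8 η / c + η = ε / 2`.
  set η := ε * c / (2 * (c + 8))
  have hη : 0 < η := by positivity
  obtain ⟨_, ⟨w₀, hw₀ : 0 < w₀.re, rfl⟩, -, hlt⟩ := hβ.exists_between (lt_add_of_pos_right β hη)
  set F := fun w => Φ w - ((β - η : ℝ) : ℂ) * w
  have hF : DifferentiableOn ℂ F {w | 0 < w.re} := hΦ.sub (differentiableOn_id.const_mul _)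
  have hre : ∀ w, 0 < w.re → η * w.re ≤ (F w).re := fun w hw => by
    have := (le_div_iff₀ hw).1 (hβ.1 ⟨w, hw, rfl⟩)
    simp only [F, Complex.sub_re, Complex.re_ofReal_mul]
    linarith
  have hmaps : MapsTo F {w | 0 < w.re} {w | 0 < w.re} := fun w hw =>
    (mul_pos hη hw).trans_le (hre w hw)
  have hFw₀ : 4 * (F w₀).re / (c * w₀.re) ≤ 8 * η / c := by
    rw [div_lt_iff₀ hw₀] at hlt
    rw [div_le_div_iff₀ (by positivity) hc]
    simp only [F, Complex.sub_re, Complex.re_ofReal_mul]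
    nlinarith
  set R := max (max ‖w₀‖ (2 * |(F w₀).im| / ε)) 1
  filter_upwards [(eventually_cobounded_le_norm R).filter_mono inf_le_left,
    mem_inf_of_right (mem_principal_self _)] with w hR hsector
  simp only [R, max_le_iff] at hR
  obtain ⟨⟨hw₀w, hy⟩, hw1⟩ := hR
  have hw : 0 < w.re := (mul_pos hc (by linarith)).trans_le hsector
  have hFw := norm_le_of_mem_sector hF hmaps hc hw₀ hw hsector hw₀w
  have hsplit : Φ w - β * w = F w - η * w := by simp only [F]; push_cast; ring
  rw [hsplit]
  rw [div_le_iff₀ hε] at hy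
  calc ‖F w - η * w‖ ≤ ‖F w‖ + η * ‖w‖ := by
        simpa [abs_of_pos hη] using norm_sub_le (F w) (η * w)
    _ ≤ (8 * η / c + η) * ‖w‖ + |(F w₀).im| := by
        nlinarith [mul_le_mul_of_nonneg_right hFw₀ (norm_nonneg w)]
    _ = ε / 2 * ‖w‖ + |(F w₀).im| := by
        rw [show 8 * η / c + η = ε / 2 by simp only [η]; field_simp; ring]
    _ ≤ ε * ‖w‖ := by nlinarith

lemma tendsto_div_of_isGLB {Φ : ℂ → ℂ} (hΦ : DifferentiableOn ℂ Φ {w | 0 < w.re})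
    {β : ℝ} (hβ : IsGLB ((fun w => (Φ w).re / w.re) '' {w | 0 < w.re}) β) {c : ℝ}
    (hc : 0 < c) :
    Tendsto (fun w => Φ w / w) (cobounded ℂ ⊓ 𝓟 {w | c * ‖w‖ ≤ w.re}) (𝓝 β) := by
  have h := ((isLittleO_sub_mul_of_isGLB hΦ hβ hc).tendsto_div_nhds_zero).add_const (β : ℂ)
  rw [zero_add] at h
  refine h.congr' ?_
  filter_upwards [(eventually_cobounded_le_norm 1).filter_mono inf_le_left] with w hw
  have : w ≠ 0 := norm_pos_iff.1 (one_pos.trans_le hw)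
  simp only [id, sub_div, mul_div_cancel_right₀ _ this, sub_add_cancel]

lemma inv_mul_norm_sub_le_re_cayley {σ z : ℂ} {M : ℝ} (hσ : ‖σ‖ = 1) (hz : z ∈ stolz σ M) :
    (M * ‖σ - z‖)⁻¹ ≤ (cayley σ z).re := by
  obtain ⟨hz1, hzM⟩ := hz
  rw [mem_ball_zero_iff] at hz1
  have hd := norm_pos_iff.2 (sub_ne_zero_of_norm_lt hσ hz1)
  have hM : 0 < M := pos_of_mul_pos_left (hd.trans hzM) (by linarith)
  rw [re_cayley hσ, inv_eq_one_div, div_le_div_iff₀ (by positivity) (by positivity)]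
  have h₁ : ‖σ - z‖ ^ 2 < M * (1 - ‖z‖) * ‖σ - z‖ := by nlinarith
  have h₂ : 1 - ‖z‖ ≤ 1 - ‖z‖ ^ 2 := by nlinarith [norm_nonneg z]
  nlinarith [mul_le_mul_of_nonneg_left h₂ (mul_pos hM hd).le]

lemma norm_cayley_le {σ z : ℂ} (hσ : ‖σ‖ = 1) (hz : ‖z‖ ≤ 1) : ‖cayley σ z‖ ≤ 2 / ‖σ - z‖ := by
  rw [cayley, norm_div]
  gcongr
  linarith [norm_add_le σ z]

lemma tendsto_re_cayley_stolz {σ : ℂ} (hσ : ‖σ‖ = 1) {M : ℝ} (hM : 0 < M) :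
    Tendsto (fun z => (cayley σ z).re) (𝓝[stolz σ M] σ) atTop := by
  have h0 : Tendsto (fun z => M * ‖σ - z‖) (𝓝[stolz σ M] σ) (𝓝[>] 0) := by
    refine tendsto_nhdsWithin_iff.2 ⟨?_, ?_⟩
    · exact (((continuous_const.sub continuous_id).norm.const_mul M).tendsto' σ 0
        (by simp)).mono_left nhdsWithin_le_nhds
    · filter_upwards [self_mem_nhdsWithin] with z hz
      exact mul_pos hM (norm_pos_iff.2 (sub_ne_zero_of_norm_lt hσ (mem_ball_zero_iff.1 hz.1)))
  refine tendsto_atTop_mono' _ ?_ h0.inv_tendsto_nhdsGT_zero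
  filter_upwards [self_mem_nhdsWithin] with z hz
  exact inv_mul_norm_sub_le_re_cayley hσ hz

lemma tendsto_cayley_stolz {σ : ℂ} (hσ : ‖σ‖ = 1) {M : ℝ} (hM : 0 < M) :
    Tendsto (cayley σ) (𝓝[stolz σ M] σ) (cobounded ℂ ⊓ 𝓟 {w | (2 * M)⁻¹ * ‖w‖ ≤ w.re}) := by
  refine tendsto_inf.2 ⟨?_, tendsto_principal.2 ?_⟩
  · rw [← tendsto_norm_atTop_iff_cobounded]
    exact tendsto_atTop_mono (fun z => Complex.re_le_norm _) (tendsto_re_cayley_stolz hσ hM)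
  · filter_upwards [self_mem_nhdsWithin] with z hz
    have hd := norm_pos_iff.2 (sub_ne_zero_of_norm_lt hσ (mem_ball_zero_iff.1 hz.1))
    calc (2 * M)⁻¹ * ‖cayley σ z‖ ≤ (2 * M)⁻¹ * (2 / ‖σ - z‖) := by
          gcongr
          exact norm_cayley_le hσ (mem_ball_zero_iff.1 hz.1).le
      _ = (M * ‖σ - z‖)⁻¹ := by field_simp
      _ ≤ (cayley σ z).re := inv_mul_norm_sub_le_re_cayley hσ hz

lemma norm_ofReal_mul {σ : ℂ} (hσ : ‖σ‖ = 1) {r : ℝ} (hr : 0 ≤ r) : ‖(r : ℂ) * σ‖ = r := by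
  rw [norm_mul, hσ, mul_one, Complex.norm_of_nonneg hr]

lemma norm_sub_ofReal_mul {σ : ℂ} (hσ : ‖σ‖ = 1) {r : ℝ} (hr : r ≤ 1) :
    ‖σ - r * σ‖ = 1 - r := by
  rw [← one_sub_mul, ← Complex.ofReal_one, ← Complex.ofReal_sub, norm_ofReal_mul hσ (by linarith)]

lemma tendsto_ofReal_mul_stolz {σ : ℂ} (hσ : ‖σ‖ = 1) {M : ℝ} (hM : 1 < M) :
    Tendsto (fun r : ℝ => (r : ℂ) * σ) (𝓝[<] 1) (𝓝[stolz σ M] σ) := by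
  refine tendsto_nhdsWithin_iff.2 ⟨?_, ?_⟩
  · exact ((Complex.continuous_ofReal.mul continuous_const).tendsto' 1 σ
      (by simp)).mono_left nhdsWithin_le_nhds
  · filter_upwards [Ioo_mem_nhdsLT zero_lt_one] with r ⟨hr0, hr1⟩
    refine ⟨mem_ball_zero_iff.2 (by rwa [norm_ofReal_mul hσ hr0.le]), ?_⟩
    rw [norm_sub_ofReal_mul hσ hr1.le, norm_ofReal_mul hσ hr0.le]
    nlinarith

lemma nhdsWithin_stolz_neBot {σ : ℂ} (hσ : ‖σ‖ = 1) {M : ℝ} (hM : 1 < M) :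
    (𝓝[stolz σ M] σ).NeBot :=
  (tendsto_ofReal_mul_stolz hσ hM).neBot

lemma tendsto_add_one_div_add_one {α : Type*} {l : Filter α} {f φ : α → ℂ} {β : ℂ}
    (hf : Tendsto f l (cobounded ℂ)) (hφ : Tendsto (fun x => φ x / f x) l (𝓝 β)) (hβ : β ≠ 0) :
    Tendsto (fun x => (f x + 1) / (φ x + 1)) l (𝓝 β⁻¹) := by
  have hinv : Tendsto (fun x => (f x)⁻¹) l (𝓝 0) := tendsto_inv₀_cobounded.comp hf
  have h := (hinv.const_add 1).div (hφ.add hinv) (by rwa [add_zero])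
  rw [add_zero, add_zero, one_div] at h
  refine h.congr' ?_
  filter_upwards [hf.eventually (eventually_cobounded_le_norm 1)] with x hx
  have : f x ≠ 0 := norm_pos_iff.1 (one_pos.trans_le hx)
  show (1 + (f x)⁻¹) / (φ x / f x + (f x)⁻¹) = _
  field_simp

lemma exists_tendsto_of_julia {g : ℂ → ℂ} {σ : ℂ} (hσ : ‖σ‖ = 1)
    (hg : DifferentiableOn ℂ g (ball 0 1)) (hmaps : MapsTo g (ball 0 1) (ball 0 1)) {a : ℝ}
    (ha : 0 < a) (hjulia : ∀ z ∈ ball (0 : ℂ) 1, (cayley σ z).re ≤ a * (cayley σ (g z)).re) :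
    ∃ b : ℝ, 0 < b ∧ b ≤ a ∧ ∀ M > 0,
      Tendsto (fun z => (σ - g z) / (σ - z)) (𝓝[stolz σ M] σ) (𝓝 (b : ℂ)) := by
  have hσ0 : σ ≠ 0 := norm_ne_zero_iff.1 (by rw [hσ]; exact one_ne_zero)
  set Φ := cayley σ ∘ g ∘ cayleyInv σ
  have hinv := mapsTo_cayleyInv hσ
  have hΦ : DifferentiableOn ℂ Φ {w | 0 < w.re} :=
    (differentiableOn_cayley hσ).comp (hg.comp (differentiableOn_cayleyInv σ) hinv)
      (hmaps.comp hinv)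
  have hΦcayley : ∀ z ∈ ball (0 : ℂ) 1, Φ (cayley σ z) = cayley σ (g z) := fun z hz => by
    simp only [Φ, Function.comp_apply,
      cayleyInv_cayley hσ0 (sub_ne_zero_of_norm_lt hσ (mem_ball_zero_iff.1 hz))]
  set S := (fun w => (Φ w).re / w.re) '' {w : ℂ | 0 < w.re}
  have hlower : a⁻¹ ∈ lowerBounds S := by
    rintro _ ⟨w, hw : 0 < w.re, rfl⟩
    have := hjulia _ (hinv hw)
    rw [cayley_cayleyInv hσ0 (add_one_ne_zero_of_re_pos hw)] at this
    rw [le_div_iff₀ hw, inv_mul_le_iff₀ ha]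
    exact this
  have hβ : IsGLB S (sInf S) :=
    isGLB_csInf ⟨_, mem_image_of_mem _ (show (0 : ℝ) < (1 : ℂ).re by simp)⟩ ⟨a⁻¹, hlower⟩
  have hβa := hβ.2 hlower
  have hβ0 := (inv_pos.2 ha).trans_le hβa
  refine ⟨_, inv_pos.2 hβ0, inv_le_of_inv_le₀ ha hβa, fun M hM => ?_⟩
  have hW := tendsto_cayley_stolz hσ hM
  have h := tendsto_add_one_div_add_one (hW.mono_right inf_le_left)
    ((tendsto_div_of_isGLB hΦ hβ (by positivity)).comp hW) (by exact_mod_cast hβ0.ne')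
  rw [Complex.ofReal_inv]
  refine h.congr' ?_
  filter_upwards [self_mem_nhdsWithin] with z hz
  simp only [hΦcayley z hz.1]
  exact (sub_div_sub_eq hσ0 (sub_ne_zero_of_norm_lt hσ (mem_ball_zero_iff.1 hz.1))
    (sub_ne_zero_of_norm_lt hσ (mem_ball_zero_iff.1 (hmaps hz.1)))).symm

/-- Schwarz–Pick at `z₀`, divided by `1 - ‖z₀‖²`, in the limit `z₀ → σ` along `l`. -/
lemma re_cayley_le_of_tendsto {g : ℂ → ℂ} (hg : DifferentiableOn ℂ g (ball 0 1))
    (hmaps : MapsTo g (ball 0 1) (ball 0 1)) {σ τ : ℂ} (hσ : ‖σ‖ = 1) (hτ : ‖τ‖ = 1)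
    {l : Filter ℂ} [l.NeBot] (hl : l ≤ 𝓝[ball 0 1] σ) (hgτ : Tendsto g l (𝓝 τ)) {a : ℝ}
    (hq : Tendsto (fun z => (1 - ‖g z‖ ^ 2) / (1 - ‖z‖ ^ 2)) l (𝓝 a)) {z : ℂ}
    (hz : z ∈ ball (0 : ℂ) 1) : (cayley σ z).re ≤ a * (cayley τ (g z)).re := by
  have hkernel : ∀ {w : ℂ → ℂ} {w₀ ζ : ℂ}, ‖w₀‖ = 1 → ζ ∈ ball (0 : ℂ) 1 →
      Tendsto w l (𝓝 w₀) →
      Tendsto (fun z₀ => (1 - ‖ζ‖ ^ 2) / ‖1 - conj (w z₀) * ζ‖ ^ 2) l (𝓝 (cayley w₀ ζ).re) := by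
    intro w w₀ ζ hw₀ hζ hw
    rw [re_cayley hw₀, ← norm_one_sub_conj_mul hw₀]
    have hconj := ((Complex.continuous_conj.tendsto _).comp hw).mul_const ζ
    refine tendsto_const_nhds.div ((tendsto_const_nhds.sub hconj).norm.pow 2) (pow_ne_zero _ ?_)
    rw [norm_one_sub_conj_mul hw₀]
    exact norm_ne_zero_iff.2 (sub_ne_zero_of_norm_lt hw₀ (mem_ball_zero_iff.1 hζ))
  refine le_of_tendsto_of_tendsto (hkernel hσ hz (tendsto_id'.2 (hl.trans nhdsWithin_le_nhds)))
    (hq.mul (hkernel hτ (hmaps hz) hgτ)) ?_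
  filter_upwards [hl self_mem_nhdsWithin] with z₀ hz₀
  have hp : 0 < 1 - ‖z₀‖ ^ 2 := by
    nlinarith [norm_nonneg z₀, mem_ball_zero_iff.1 hz₀]
  rw [div_mul_eq_mul_div, le_div_iff₀ hp]
  calc (1 - ‖z‖ ^ 2) / ‖1 - conj z₀ * z‖ ^ 2 * (1 - ‖z₀‖ ^ 2)
      = (1 - ‖z₀‖ ^ 2) * (1 - ‖z‖ ^ 2) / ‖1 - conj z₀ * z‖ ^ 2 := by ring
    _ ≤ (1 - ‖g z₀‖ ^ 2) * (1 - ‖g z‖ ^ 2) / ‖1 - conj (g z₀) * g z‖ ^ 2 :=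
      schwarz_pick hg hmaps hz₀ hz
    _ = _ := by ring

lemma eq_of_re_cayley_le {g : ℂ → ℂ} {σ τ : ℂ} (hσ : ‖σ‖ = 1) {M : ℝ} (hM : 1 < M)
    (hlim : Tendsto g (𝓝[stolz σ M] σ) (𝓝 σ)) {a : ℝ}
    (hjulia : ∀ z ∈ ball (0 : ℂ) 1, (cayley σ z).re ≤ a * (cayley τ (g z)).re) : τ = σ := by
  by_contra hne
  have := nhdsWithin_stolz_neBot hσ hM
  have hcont : ContinuousAt (cayley τ) σ :=
    (continuousAt_const.add continuousAt_id).div (continuousAt_const.sub continuousAt_id)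
      (sub_ne_zero.2 hne)
  have hbdd : Tendsto (fun z => a * (cayley τ (g z)).re) (𝓝[stolz σ M] σ)
      (𝓝 (a * (cayley τ σ).re)) :=
    ((Complex.continuous_re.tendsto _).comp (hcont.tendsto.comp hlim)).const_mul a
  obtain ⟨z, hz, hbig, hsmall⟩ := (eventually_mem_nhdsWithin.and
    (((tendsto_re_cayley_stolz hσ (by linarith)).eventually_gt_atTop
      (a * (cayley τ σ).re + 1)).and (hbdd.eventually (gt_mem_nhds (lt_add_one _))))).exists
  linarith [hjulia z hz.1]

lemma julia_inequality {g : ℂ → ℂ} {σ : ℂ} (hσ : ‖σ‖ = 1)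
    (hg : DifferentiableOn ℂ g (ball 0 1)) (hmaps : MapsTo g (ball 0 1) (ball 0 1)) {M : ℝ}
    (hM : 1 < M) (hlim : Tendsto g (𝓝[stolz σ M] σ) (𝓝 σ)) {a : ℝ}
    (ha : MapClusterPt a (𝓝[ball 0 1] σ) (fun z => (1 - ‖g z‖) / (1 - ‖z‖))) :
    0 < a ∧ ∀ z ∈ ball (0 : ℂ) 1, (cayley σ z).re ≤ a * (cayley σ (g z)).re := by
  obtain ⟨U, hU, hu⟩ := mapClusterPt_iff_ultrafilter.1 ha
  obtain ⟨τ, -, hgτ⟩ := (isCompact_closedBall (0 : ℂ) 1).ultrafilter_le_nhds' (U.map g)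
    (Ultrafilter.mem_map.2 (mem_of_superset (hU self_mem_nhdsWithin)
      fun z hz => ball_subset_closedBall (hmaps hz)))
  have hball : ∀ᶠ z in (U : Filter ℂ), z ∈ ball (0 : ℂ) 1 := hU self_mem_nhdsWithin
  have hnorm : Tendsto (‖·‖) (U : Filter ℂ) (𝓝 1) := by
    have h : Tendsto (fun z : ℂ => z) U (𝓝 σ) := hU.trans nhdsWithin_le_nhds
    simpa [hσ] using h.norm
  have hgnorm : Tendsto (‖g ·‖) (U : Filter ℂ) (𝓝 1) := by
    have h : Tendsto (fun z => 1 - (1 - ‖g z‖) / (1 - ‖z‖) * (1 - ‖z‖)) U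
        (𝓝 (1 - a * (1 - 1))) := tendsto_const_nhds.sub (hu.mul (tendsto_const_nhds.sub hnorm))
    rw [sub_self, mul_zero, sub_zero] at h
    refine h.congr' ?_
    filter_upwards [hball] with z hz
    have : 1 - ‖z‖ ≠ 0 := (sub_pos.2 (mem_ball_zero_iff.1 hz)).ne'
    rw [div_mul_cancel₀ _ this]
    ring
  have hτ : ‖τ‖ = 1 := tendsto_nhds_unique (Tendsto.norm hgτ) hgnorm
  have hq : Tendsto (fun z => (1 - ‖g z‖ ^ 2) / (1 - ‖z‖ ^ 2)) (U : Filter ℂ) (𝓝 a) := by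
    have h : Tendsto (fun z => (1 - ‖g z‖) / (1 - ‖z‖) * ((1 + ‖g z‖) / (1 + ‖z‖))) U
        (𝓝 (a * ((1 + 1) / (1 + 1)))) :=
      hu.mul ((hgnorm.const_add 1).div (hnorm.const_add 1) (by norm_num))
    rw [div_self (by norm_num), mul_one] at h
    refine h.congr' ?_
    filter_upwards with z
    rw [div_mul_div_comm]
    congr 1 <;> ring
  have hjulia := fun z hz => re_cayley_le_of_tendsto hg hmaps hσ hτ hU hgτ hq (z := z) hz
  have hapos : 0 < a := by
    have h0 := hjulia 0 (mem_ball_self one_pos)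
    rw [cayley, add_zero, sub_zero, div_self (norm_ne_zero_iff.1 (by rw [hσ]; exact one_ne_zero)),
      Complex.one_re] at h0
    exact pos_of_mul_pos_left (one_pos.trans_le h0) (re_cayley_pos hτ
      (mem_ball_zero_iff.1 (hmaps (mem_ball_self one_pos)))).le
  rw [eq_of_re_cayley_le hσ hM hlim hjulia] at hjulia
  exact ⟨hapos, hjulia⟩

lemma liminf_le_norm_of_tendsto {g : ℂ → ℂ} {σ L : ℂ} (hσ : ‖σ‖ = 1) {M : ℝ} (hM : 1 < M)
    (h : Tendsto (fun z => (σ - g z) / (σ - z)) (𝓝[stolz σ M] σ) (𝓝 L)) :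
    liminf (fun z : ℂ => (((1 - ‖g z‖) / (1 - ‖z‖) : ℝ) : EReal)) (𝓝[ball 0 1] σ)
      ≤ (‖L‖ : EReal) := by
  have hR := tendsto_ofReal_mul_stolz hσ hM
  have hlim : Tendsto (fun z => ((‖(σ - g z) / (σ - z)‖ : ℝ) : EReal))
      (map (fun r : ℝ => (r : ℂ) * σ) (𝓝[<] 1)) (𝓝 (‖L‖ : EReal)) :=
    (continuous_coe_real_ereal.tendsto _).comp (h.comp hR).norm
  calc liminf (fun z : ℂ => (((1 - ‖g z‖) / (1 - ‖z‖) : ℝ) : EReal)) (𝓝[ball 0 1] σ)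
      ≤ liminf (fun z : ℂ => (((1 - ‖g z‖) / (1 - ‖z‖) : ℝ) : EReal))
          (map (fun r : ℝ => (r : ℂ) * σ) (𝓝[<] 1)) :=
        liminf_le_liminf_of_le (hR.trans (nhdsWithin_mono _ (sep_subset _ _)))
    _ ≤ liminf (fun z => ((‖(σ - g z) / (σ - z)‖ : ℝ) : EReal))
          (map (fun r : ℝ => (r : ℂ) * σ) (𝓝[<] 1)) := by
        refine liminf_le_liminf (eventually_map.2 ?_)
        filter_upwards [Ioo_mem_nhdsLT zero_lt_one] with r ⟨hr0, hr1⟩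
        rw [EReal.coe_le_coe_iff, norm_div, norm_sub_ofReal_mul hσ hr1.le,
          norm_ofReal_mul hσ hr0.le]
        exact div_le_div_of_nonneg_right (by simpa [hσ] using norm_sub_norm_le σ (g (r * σ)))
          (by linarith)
    _ = ‖L‖ := hlim.liminf_eq

lemma exists_mapClusterPt_of_liminf_lt_top {ι : Type*} {l : Filter ι} [l.NeBot] {u : ι → ℝ}
    (hu : ∀ᶠ x in l, 0 ≤ u x) (htop : liminf (fun x => (u x : EReal)) l < ⊤) :
    ∃ a : ℝ, liminf (fun x => (u x : EReal)) l = a ∧ MapClusterPt a l u := by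
  have h0 : (0 : EReal) ≤ liminf (fun x => (u x : EReal)) l :=
    le_liminf_of_le (by isBoundedDefault) (hu.mono fun x hx => EReal.coe_nonneg.2 hx)
  have hα := EReal.coe_toReal htop.ne (ne_bot_of_le_ne_bot EReal.zero_ne_bot h0)
  refine ⟨_, hα.symm, ?_⟩
  have h : MapClusterPt (liminf (fun x => (u x : EReal)) l) l (fun x => (u x : EReal)) :=
    MapClusterPt.liminf
  rw [← hα] at h
  exact EReal.isEmbedding_coe.isInducing.mapClusterPt_iff.1 (mapClusterPt_comp.1 h)

end AngularDerivative

open AngularDerivative in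
/-- Julia-Wolff-Carathéodory: if `g : 𝔻 → 𝔻` is holomorphic with
angular limit `σ` at `σ ∈ ∂𝔻`, then `g` has a finite angular derivative at `σ`
(i.e. `∠lim_{z→σ} (σ - g z)/(σ - z)` exists finitely) if and only if
`liminf_{z→σ} (1-|g z|)/(1-|z|) < +∞`; and in that case this angular limit
equals the liminf. -/
theorem julia_wolff_caratheodory (g : ℂ → ℂ) (σ : ℂ) (hσ : ‖σ‖ = 1)
    (hg : DifferentiableOn ℂ g (Metric.ball (0:ℂ) 1))
    (hmaps : Set.MapsTo g (Metric.ball (0:ℂ) 1) (Metric.ball (0:ℂ) 1))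
    (hlim : ∀ M > (1:ℝ), Tendsto g (nhdsWithin σ (stolz σ M)) (nhds σ)) :
    ((∃ L : ℂ, ∀ M > (1:ℝ),
        Tendsto (fun z => (σ - g z) / (σ - z)) (nhdsWithin σ (stolz σ M)) (nhds L)) ↔
      liminf (fun z : ℂ => (((1 - ‖g z‖) / (1 - ‖z‖) : ℝ) : EReal))
        (nhdsWithin σ (Metric.ball (0:ℂ) 1)) < ⊤) ∧
    (∀ L : ℂ,
      (∀ M > (1:ℝ),
        Tendsto (fun z => (σ - g z) / (σ - z)) (nhdsWithin σ (stolz σ M)) (nhds L)) →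
      L = ((liminf
        (fun z : ℂ => (((1 - ‖g z‖) / (1 - ‖z‖) : ℝ) : EReal))
        (nhdsWithin σ (Metric.ball (0:ℂ) 1))).toReal : ℂ)) := by
  set α := liminf (fun z : ℂ => (((1 - ‖g z‖) / (1 - ‖z‖) : ℝ) : EReal)) (𝓝[ball 0 1] σ)
  have := nhdsWithin_stolz_neBot hσ one_lt_two
  have : (𝓝[ball (0 : ℂ) 1] σ).NeBot := this.mono (nhdsWithin_mono _ (sep_subset _ _))
  have hα_lt : ∀ L, (∀ M > (1:ℝ), Tendsto (fun z => (σ - g z) / (σ - z)) (𝓝[stolz σ M] σ)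
      (𝓝 L)) → α < ⊤ := fun L hL =>
    (liminf_le_norm_of_tendsto hσ one_lt_two (hL 2 one_lt_two)).trans_lt (EReal.coe_lt_top _)
  have hlimit : α < ⊤ → ∀ M > (1:ℝ),
      Tendsto (fun z => (σ - g z) / (σ - z)) (𝓝[stolz σ M] σ) (𝓝 (α.toReal : ℂ)) := by
    intro hα_top
    obtain ⟨a, hαa : α = a, hcluster⟩ := exists_mapClusterPt_of_liminf_lt_top (by
      filter_upwards [self_mem_nhdsWithin] with z hz
      exact div_nonneg (sub_nonneg.2 (mem_ball_zero_iff.1 (hmaps hz)).le)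
        (sub_nonneg.2 (mem_ball_zero_iff.1 hz).le)) hα_top
    obtain ⟨ha, hjulia⟩ := julia_inequality hσ hg hmaps one_lt_two (hlim 2 one_lt_two) hcluster
    obtain ⟨b, hb0, hba, hb⟩ := exists_tendsto_of_julia hσ hg hmaps ha hjulia
    have hab : α ≤ ‖(b : ℂ)‖ := liminf_le_norm_of_tendsto hσ one_lt_two (hb 2 two_pos)
    rw [hαa, Complex.norm_of_nonneg hb0.le, EReal.coe_le_coe_iff] at hab
    rw [hαa, EReal.toReal_coe, ← le_antisymm hba hab]
    exact fun M hM => hb M (by linarith)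
  exact ⟨⟨fun ⟨L, hL⟩ => hα_lt L hL, fun h => ⟨_, hlimit h⟩⟩, fun L hL =>
    tendsto_nhds_unique (hL 2 one_lt_two) (hlimit (hα_lt L hL) 2 one_lt_two)⟩
end
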